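/- arXiv:2301.01958 — 14 statements merged into one kernel-verified Lean document; each statement's English description precedes it below -/
import Mathlib

section
/- For any integers m, d ≥ 1 and any functions a_1, ..., a_d : [s] → ℕ with s = (m-1)·m^d + 1, there exists a subset X ⊆ [s] of size m such that for every i ∈ [d], the sum over x ∈ X of a_i(x) is a multiple of m. -/
/-! There are only `m ^ d` residue vectors `(a i x mod m)ᵢ`, so by pigeonhole some `m` of the
`(m - 1) * m ^ d + 1` points share one, and a sum of `m` equal residues vanishes mod `m`. -/

open Finset

theorem Finset.exists_subset_card_eq_forall_eq_of_card_mul_lt_card {α β : Type*} [Fintype β]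
    (f : α → β) (s : Finset α) (n : ℕ) (hs : Fintype.card β * (n - 1) < #s) :
    ∃ y, ∃ X ⊆ s, #X = n ∧ ∀ x ∈ X, f x = y := by
  classical
  obtain ⟨y, -, hy⟩ :=
    exists_lt_card_fiber_of_mul_lt_card_of_maps_to (f := f) (t := univ) (fun _ _ => mem_univ _) hs
  obtain ⟨X, hXs, hX⟩ := exists_subset_card_eq (show n ≤ #{x ∈ s | f x = y} by omega)
  exact ⟨y, X, hXs.trans (filter_subset _ _), hX, fun x hx => (mem_filter.1 (hXs hx)).2⟩

theorem Nat.dvd_sum_of_card_eq_of_forall_cast_eq {α : Type*} {m : ℕ} (f : α → ℕ)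
    (X : Finset α) (hX : #X = m) (c : ZMod m) (hc : ∀ x ∈ X, (f x : ZMod m) = c) :
    m ∣ ∑ x ∈ X, f x := by
  rw [← ZMod.natCast_eq_zero_iff]
  push_cast
  rw [sum_congr rfl hc, sum_const, hX, nsmul_eq_mul, ZMod.natCast_self, zero_mul]

theorem davenport_pigeonhole_general (m d : ℕ) (hm : 1 ≤ m)
    (a : Fin d → Fin ((m - 1) * m ^ d + 1) → ℕ) :
    ∃ X : Finset (Fin ((m - 1) * m ^ d + 1)), X.card = m ∧
      ∀ i : Fin d, m ∣ ∑ x ∈ X, a i x := by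
  have : NeZero m := ⟨by omega⟩
  have hcard : Fintype.card (Fin d → ZMod m) * (m - 1) <
      #(univ : Finset (Fin ((m - 1) * m ^ d + 1))) := by
    simp [ZMod.card, mul_comm]
  obtain ⟨y, X, -, hX, hy⟩ := exists_subset_card_eq_forall_eq_of_card_mul_lt_card
    (fun x i => (a i x : ZMod m)) univ m hcard
  exact ⟨X, hX, fun i => Nat.dvd_sum_of_card_eq_of_forall_cast_eq _ X hX (y i)
    fun x hx => congrFun (hy x hx) i⟩

theorem davenport_pigeonhole (m d : ℕ) (hm : 1 ≤ m) (hd : 1 ≤ d)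
    (a : Fin d → Fin ((m - 1) * m ^ d + 1) → ℕ) :
    ∃ X : Finset (Fin ((m - 1) * m ^ d + 1)), X.card = m ∧
      ∀ i : Fin d, m ∣ ∑ x ∈ X, a i x :=
  davenport_pigeonhole_general m d hm a
end

section
/- Let f : Q^n → Q^n with |Q| = q and suppose the interaction graph G(f) has a vertex i whose strict in-degree is at most n-k-1 (i.e., there is a set I of k indices, not containing i, such that f_i(x) does not depend on the coordinates in I). Then the partition A = {A_1, ..., A_q} of Q^n, where A_p = {x : x_i = p-1}, is a balanced k-nice partition of f: each |A_p| = q^{n-1}, and for all p, ℓ ∈ [q], |A_ℓ ∩ f^{-1}(A_p)| is a multiple of q^k. -/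
/-!
Since `i ∉ I` and `f_i` ignores the coordinates in `I`, the event `x_i = ℓ ∧ f_i(x) = p` only
sees the coordinates outside `I`. Splitting `Q^n ≃ Q^I × Q^(n ∖ I)`, that event is `Q^I` times a
set of the second factor, so its size is a multiple of `q^|I| = q^k`. The sets `A_p` are the
fibres of a coordinate projection, of size `q^(n-1)`.
-/

open Finset

/-- `Depends f j i` : the interaction graph `G(f)` has an arc from `j` to `i`,
i.e. the local function `f_i` depends on input `j`. -/
def Depends {n q : ℕ} (f : (Fin n → Fin q) → (Fin n → Fin q)) (j i : Fin n) : Prop :=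
  ∃ x y : Fin n → Fin q, (∀ k, k ≠ j → x k = y k) ∧ f x i ≠ f y i

theorem card_pow_card_dvd_card_filter_of_eqOn_compl {ι α : Type*} [Fintype ι] [DecidableEq ι]
    [Fintype α] (s : Finset ι) (P : (ι → α) → Prop) [DecidablePred P]
    (hP : ∀ x y : ι → α, (∀ j ∉ s, x j = y j) → P x → P y) :
    Fintype.card α ^ #s ∣ #{x | P x} := by
  let e := Equiv.piEquivPiSubtypeProd (· ∈ s) fun _ => α
  let split : {x // P x} ≃ (s → α) × {b : {j // j ∉ s} → α // ∃ a, P (e.symm (a, b))} :=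
    { toFun x := ((e x).1, ⟨(e x).2, (e x).1, by simpa using x.2⟩)
      invFun z := ⟨e.symm (z.1, z.2.1), by
        obtain ⟨a, ha⟩ := z.2.2
        exact hP _ _ (fun j hj => by simp [e, hj]) ha⟩
      left_inv x := by simp
      right_inv z := by simp }
  rw [← Fintype.card_subtype, Fintype.card_congr split, Fintype.card_prod, Fintype.card_fun,
    Fintype.card_coe]
  exact dvd_mul_right _ _

theorem apply_eq_of_forall_not_depends {n q : ℕ} {f : (Fin n → Fin q) → (Fin n → Fin q)}
    {i : Fin n} {s : Finset (Fin n)} (hdep : ∀ j ∈ s, ¬ Depends f j i) {x y : Fin n → Fin q}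
    (hxy : ∀ j ∉ s, x j = y j) : f x i = f y i := by
  induction s using Finset.induction_on generalizing x with
  | empty => rw [funext fun j => hxy j (notMem_empty j)]
  | insert a t _ ih =>
    set z := Function.update x a (y a)
    have hxz : f x i = f z i := by
      by_contra hne
      exact hdep a (mem_insert_self a t)
        ⟨x, z, fun j hj => (Function.update_of_ne hj _ _).symm, hne⟩
    refine hxz.trans (ih (fun j hj => hdep j (mem_insert_of_mem hj)) fun j hj => ?_)
    by_cases hja : j = a
    · simp [z, hja]
    · simp [z, hja, hxy j (by simp [hja, hj])]

theorem balanced_nice_of_small_strict_indegree_general {n q k : ℕ}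
    (f : (Fin n → Fin q) → (Fin n → Fin q)) (i : Fin n)
    (I : Finset (Fin n)) (hI : I.card = k) (hiI : i ∉ I)
    (hdep : ∀ j ∈ I, ¬ Depends f j i) :
    (∀ p : Fin q,
      (univ.filter (fun x : Fin n → Fin q => x i = p)).card = q ^ (n - 1)) ∧
    (∀ p ℓ : Fin q,
      q ^ k ∣ (univ.filter (fun x : Fin n → Fin q => x i = ℓ ∧ f x i = p)).card) := by
  refine ⟨fun p => ?_, fun p ℓ => ?_⟩
  · simpa [Fintype.piFinset_univ] using
      Fintype.card_filter_piFinset_const_eq_of_mem (univ : Finset (Fin q)) i (mem_univ p)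
  · have hfiber := card_pow_card_dvd_card_filter_of_eqOn_compl I
      (fun x : Fin n → Fin q => x i = ℓ ∧ f x i = p) fun x y hxy hx => by
        rw [← hxy i hiI, ← apply_eq_of_forall_not_depends hdep hxy]
        exact hx
    rwa [Fintype.card_fin, hI] at hfiber

theorem balanced_nice_of_small_strict_indegree {n q k : ℕ} (hn : 1 ≤ n) (hq : 1 ≤ q)
    (f : (Fin n → Fin q) → (Fin n → Fin q)) (i : Fin n)
    (I : Finset (Fin n)) (hI : I.card = k) (hiI : i ∉ I)
    (hdep : ∀ j ∈ I, ¬ Depends f j i) :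
    (∀ p : Fin q,
      (univ.filter (fun x : Fin n → Fin q => x i = p)).card = q ^ (n - 1)) ∧
    (∀ p ℓ : Fin q,
      q ^ k ∣ (univ.filter (fun x : Fin n → Fin q => x i = ℓ ∧ f x i = p)).card) :=
  balanced_nice_of_small_strict_indegree_general f i I hI hiI hdep
end

section
/- Let f : Q^n → Q^n with |Q| = q, let 1 ≤ k < n, and suppose f admits a balanced k-nice partition. Then there exists h isomorphic to f (i.e., h = π ∘ f ∘ π^{-1} for some permutation π of Q^n) such that the interaction graph G(h) has a vertex of strict in-degree at most n-k-1. -/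
/-!
Let `part x` be the index of the block containing `x`. Inside each block `A ℓ` the sets
`A ℓ ∩ f⁻¹(A p)` have sizes divisible by `q ^ k`, so the block can be identified with
`Q^(n-1-k) × Q^k` in such a way that `part ∘ f` only depends on the first factor. Sending `x` to
`(part x, coordinates in Q^(n-1-k), coordinates in Q^k)` gives a permutation `π` of `Q^n` for
which coordinate `0` of `π ∘ f ∘ π⁻¹` is `part ∘ f ∘ π⁻¹`, a function of the first `n - k`
coordinates only.
-/

open Finset
open scoped Classical

theorem exists_equiv_prod_factor_of_dvd_card_fiber {α β R D : Type*} [Fintype α] [Fintype β]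
    [Fintype R] [Fintype D] [Nonempty D] (t : α → β)
    (hα : Fintype.card α = Fintype.card R * Fintype.card D)
    (hdvd : ∀ b, Fintype.card D ∣ Fintype.card {x // t x = b}) :
    ∃ (e : α ≃ R × D) (u : R → β), ∀ x, t x = u (e x).1 := by
  choose m hm using hdvd
  have hD : 0 < Fintype.card D := Fintype.card_pos
  have fiberEquiv (b : β) : {x // t x = b} ≃ Fin (m b) × D :=
    Fintype.equivOfCardEq (by simp [hm b, mul_comm])
  have hR : Fintype.card (Σ b, Fin (m b)) = Fintype.card R := by
    refine Nat.eq_of_mul_eq_mul_right hD ?_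
    rw [← hα, ← Fintype.card_congr (Equiv.sigmaFiberEquiv t), Fintype.card_sigma,
      Fintype.card_sigma, Finset.sum_mul]
    simp [hm, mul_comm]
  let E : (Σ b, Fin (m b)) ≃ R := Fintype.equivOfCardEq hR
  refine ⟨(Equiv.sigmaFiberEquiv t).symm.trans <| (Equiv.sigmaCongrRight fiberEquiv).trans <|
    (Equiv.sigmaProdDistrib _ _).symm.trans (Equiv.prodCongrLeft fun _ => E),
    fun r => (E.symm r).1, fun x => ?_⟩
  simp [Equiv.sigmaProdDistrib]

theorem exists_fiberwise_equiv_prod_factor_of_dvd_card {X β γ R D : Type*} [Fintype X]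
    [Fintype β] [Fintype γ] [Fintype R] [Fintype D] [Nonempty D] (p : X → β) (t : X → γ)
    (hp : ∀ b, Fintype.card {x // p x = b} = Fintype.card R * Fintype.card D)
    (hdvd : ∀ b c, Fintype.card D ∣ Fintype.card {x // p x = b ∧ t x = c}) :
    ∃ (e : X ≃ β × R × D) (u : β × R → γ),
      ∀ x, (e x).1 = p x ∧ t x = u ((e x).1, (e x).2.1) := by
  have (b : β) : ∃ (e : {x // p x = b} ≃ R × D) (u : R → γ),
      ∀ x : {x // p x = b}, t x = u (e x).1 :=
    exists_equiv_prod_factor_of_dvd_card_fiber (fun x : {x // p x = b} => t x) (hp b) fun c => by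
      rw [Fintype.card_congr (Equiv.subtypeSubtypeEquivSubtypeInter _ (t · = c))]
      exact hdvd b c
  choose e u he using this
  refine ⟨(Equiv.sigmaFiberEquiv p).symm.trans <| (Equiv.sigmaCongrRight e).trans <|
    Equiv.sigmaEquivProd _ _, fun bu => u bu.1 bu.2, fun x => ⟨rfl, ?_⟩⟩
  exact he (p x) ⟨x, rfl⟩

theorem card_filter_strict_depends_le {n q : ℕ} (F : (Fin n → Fin q) → (Fin n → Fin q))
    (i : Fin n) (s : Finset (Fin n))
    (hF : ∀ x y, x i = y i → (∀ j ∈ s, x j = y j) → F x i = F y i) :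
    (univ.filter fun j => j ≠ i ∧ Depends F j i).card ≤ s.card := by
  refine card_le_card fun j hj => ?_
  obtain ⟨hji, x, y, hxy, hne⟩ := (mem_filter.mp hj).2
  by_contra hjs
  exact hne (hF x y (hxy i hji.symm) fun l hl => hxy l (ne_of_mem_of_not_mem hl hjs))

theorem small_strict_indegree_of_balanced_nice_general {n q k : ℕ} (hq : 2 ≤ q)
    (hkn : k < n)
    (f : (Fin n → Fin q) → (Fin n → Fin q))
    (A : Fin q → Finset (Fin n → Fin q))
    (hpart : ∀ x, ∃! p, x ∈ A p)
    (hbal : ∀ p, (A p).card = q ^ (n - 1))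
    (hnice : ∀ p ℓ : Fin q, q ^ k ∣ ((A ℓ).filter (fun x => f x ∈ A p)).card) :
    ∃ π : Equiv.Perm (Fin n → Fin q), ∃ i : Fin n,
      (univ.filter (fun j => j ≠ i ∧
        Depends (fun x => π (f (π.symm x))) j i)).card ≤ n - k - 1 := by
  obtain ⟨a, rfl⟩ : ∃ a, n = a + k + 1 := ⟨n - k - 1, by omega⟩
  have : NeZero q := ⟨by omega⟩
  choose part hpart_mem hpart_unique using hpart
  have mem_iff (x p) : x ∈ A p ↔ part x = p :=
    ⟨fun h => (hpart_unique x p h).symm, (· ▸ hpart_mem x)⟩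
  obtain ⟨e, u, he⟩ := exists_fiberwise_equiv_prod_factor_of_dvd_card
    (R := Fin a → Fin q) (D := Fin k → Fin q) part (fun x => part (f x))
    (fun b => by
      have : univ.filter (part · = b) = A b := by ext x; simp [mem_iff]
      simp [Fintype.card_subtype, this, hbal, pow_add])
    (fun b c => by
      have : univ.filter (fun x => part x = b ∧ part (f x) = c)
          = (A b).filter (f · ∈ A c) := by
        ext x; simp [mem_iff]
      simpa [Fintype.card_subtype, this] using hnice c b)
  let G := (Equiv.prodCongrRight fun _ => Fin.appendEquiv a k).trans
    (Fin.consEquiv fun _ : Fin (a + k + 1) => Fin q)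
  have coord_zero (z) : (e.trans G) (f ((e.trans G).symm z)) 0
      = u (z 0, fun i => z (Fin.castAdd k i).succ) := by
    have hz := (he (e.symm (G.symm z))).2
    rw [Equiv.apply_symm_apply] at hz
    simpa [G, (he _).1, Fin.tail] using hz
  refine ⟨e.trans G, 0, ?_⟩
  calc _ ≤ (univ.image fun i : Fin a => (Fin.castAdd k i).succ).card := by
        refine card_filter_strict_depends_le _ _ _ fun x y h0 hs => ?_
        rw [coord_zero, coord_zero, h0]
        congr 2 with i : 1
        exact hs _ (mem_image_of_mem _ (mem_univ i))
    _ ≤ a := card_image_le.trans (by simp)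
    _ = a + k + 1 - k - 1 := by omega

theorem small_strict_indegree_of_balanced_nice {n q k : ℕ} (hq : 2 ≤ q)
    (hk : 1 ≤ k) (hkn : k < n)
    (f : (Fin n → Fin q) → (Fin n → Fin q))
    (A : Fin q → Finset (Fin n → Fin q))
    (hpart : ∀ x, ∃! p, x ∈ A p)
    (hbal : ∀ p, (A p).card = q ^ (n - 1))
    (hnice : ∀ p ℓ : Fin q, q ^ k ∣ ((A ℓ).filter (fun x => f x ∈ A p)).card) :
    ∃ π : Equiv.Perm (Fin n → Fin q), ∃ i : Fin n,
      (univ.filter (fun j => j ≠ i ∧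
        Depends (fun x => π (f (π.symm x))) j i)).card ≤ n - k - 1 :=
  small_strict_indegree_of_balanced_nice_general hq hkn f A hpart hbal hnice
end

section
/- Let f : Q^n → Q^n with q ≥ 3 and n ≥ 2. Suppose f has a complete-pattern: there exist x ∈ Q^n and a set A ⊆ Q^n with |A| = n such that x, f(x) ∉ A ∪ f(A), and either x ≠ f(x) or A ∩ f(A) = ∅. Then there exists h isomorphic to f whose interaction graph G(h) is the complete digraph K_n (all n² arcs present, including loops). -/
/-!
Choose the permutation `π` with `π x = 0` and `π (a k) = u k` for an enumeration `a` of `A`, where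
`u k` is `1` at `k` and `0` elsewhere. Since `0` and `u k` differ only in coordinate `k`, every arc
`k → i` of `G(π ∘ f ∘ π⁻¹)` is present as soon as `π (f x)` differs in every coordinate from each
`π (f (a k))`. Take `π (f x) = 0` if `x = f x`, and otherwise the point `c` with `c k = 2` if
`a k ∈ f(A)` and `c k = 1` if not; as `n ≥ 2`, `u k` then differs from `π (f x)` everywhere exactly
when `a k ∈ f(A)`. The other points of `f(A)`, at most `n - |A ∩ f(A)|` of them, are mapped into
the `(q - 1)^n ≥ n + 1` points differing from `π (f x)` everywhere, of which at most
`1 + |A ∩ f(A)|` are already used.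
-/

open Finset

open Function Equiv

theorem Set.injOn_insert_insert {α β : Type*} {v : α → β} {s : Set α} {a b : α} (ha : a ∉ s)
    (hb : b ∉ s) (hs : Set.InjOn v s) (hva : v a ∉ v '' s) (hvb : a ≠ b → v b ∉ v '' s)
    (hab : a ≠ b → v a ≠ v b) : Set.InjOn v (insert a (insert b s)) := by
  by_cases hab' : a = b
  · rw [hab', Set.insert_idem]
    exact (Set.injOn_insert (hab' ▸ ha)).2 ⟨hs, hab' ▸ hva⟩
  · refine (Set.injOn_insert (by simp [hab', ha])).2 ⟨(Set.injOn_insert hb).2 ⟨hs, hvb hab'⟩, ?_⟩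
    rw [Set.image_insert_eq]
    rintro (h | h)
    exacts [hab hab' h, hva h]

theorem update_const_injective {ι Q : Type*} [DecidableEq ι] {o l : Q} (h : o ≠ l) :
    Injective fun k : ι => update (fun _ => o) k l := fun k k' hkk' => by
  by_contra hne
  simpa [hne, h.symm] using congrFun hkk' k

theorem update_const_ne_of_forall_ne {ι Q : Type*} [DecidableEq ι] [Nontrivial ι] {o l : Q}
    {p : ι → Q} (hp : ∀ i, p i ≠ o) (k : ι) : update (fun _ => o) k l ≠ p := fun h => by
  obtain ⟨i, hi⟩ := exists_ne k
  exact hp i (by rw [← h, update_of_ne hi])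

theorem Equiv.Perm.exists_eqOn_mapsTo_of_card_le {α : Type*} [DecidableEq α] {v : α → α}
    {S T G : Finset α} (hv : Set.InjOn v S) (hTS : Set.MapsTo v ↑(T ∩ S) G)
    (hcard : #(T \ S) ≤ #(G \ S.image v)) :
    ∃ π : Perm α, Set.EqOn π v S ∧ Set.MapsTo π T G := by
  obtain ⟨g⟩ : Nonempty ((T \ S : Finset α) ↪ (G \ S.image v : Finset α)) :=
    Function.Embedding.nonempty_of_card_le (by simpa using hcard)
  obtain ⟨π, hπ⟩ := Perm.exists_extending_pair
    (Sum.elim (fun y : S => (y : α)) (fun y : (T \ S : Finset α) => (y : α)))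
    (Sum.elim (fun y : S => v y) (fun y => (g y : α)))
    (Subtype.val_injective.sumElim Subtype.val_injective fun y y' h =>
      (mem_sdiff.1 y'.2).2 (h ▸ y.2))
    (hv.injective.sumElim (Subtype.val_injective.comp g.injective) fun y y' h =>
      (mem_sdiff.1 (g y').2).2 (h ▸ mem_image_of_mem v y.2))
  simp only [Sum.forall, Sum.elim_inl, Sum.elim_inr, Subtype.forall] at hπ
  refine ⟨π, hπ.1, fun y hy => ?_⟩
  by_cases hyS : y ∈ S
  · exact hπ.1 y hyS ▸ hTS (mem_inter.2 ⟨hy, hyS⟩)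
  · rw [hπ.2 y (mem_sdiff.2 ⟨hy, hyS⟩)]
    exact (mem_sdiff.1 (g _).2).1

theorem card_image_sdiff_le_card_sdiff_image {α : Type*} [DecidableEq α] {f v : α → α} {x : α}
    {A G : Finset α} (hfx : f x ∉ A.image f)
    (hG : ∀ y ∈ insert x (insert (f x) A), v y ∈ G → y = x ∨ y ∈ A.image f)
    (hAG : #A < #G) :
    #(A.image f \ insert x (insert (f x) A)) ≤ #(G \ (insert x (insert (f x) A)).image v) := by
  set S := insert x (insert (f x) A)
  have hused : S.image v ∩ G ⊆ (insert x (A ∩ A.image f)).image v := by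
    intro p hp
    obtain ⟨⟨y, hyS, rfl⟩, hyG⟩ := And.imp_left mem_image.1 (mem_inter.1 hp)
    refine mem_image_of_mem v ?_
    rcases hG y hyS hyG with rfl | hyf
    · exact mem_insert_self _ _
    rcases mem_insert.1 hyS with rfl | hy
    · exact mem_insert_self _ _
    rcases mem_insert.1 hy with rfl | hyA
    · exact absurd hyf hfx
    · exact mem_insert_of_mem (mem_inter.2 ⟨hyA, hyf⟩)
  have hnew : #(A.image f \ S) ≤ #(A.image f \ A) :=
    card_le_card (sdiff_subset_sdiff subset_rfl ((subset_insert _ _).trans (subset_insert _ _)))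
  have hfA : #(A.image f) ≤ #A := card_image_le
  have hcommon : #(A ∩ A.image f) ≤ #A := card_le_card inter_subset_left
  have hnused := (card_le_card hused).trans (card_image_le.trans (card_insert_le _ _))
  rw [card_sdiff, card_sdiff] at *
  omega

theorem Equiv.Perm.exists_eqOn_mapsTo_image {α : Type*} [DecidableEq α] {f v : α → α} {x : α}
    {A G : Finset α} (hx : x ∉ A.image f) (hfx : f x ∉ A.image f)
    (hv : Set.InjOn v (insert x (insert (f x) A))) (hvA : ∀ y ∈ A, v y ∈ G ↔ y ∈ A.image f)
    (hvfx : v (f x) ∉ G) (hAG : #A < #G) :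
    ∃ π : Perm α, Set.EqOn π v (insert x (insert (f x) A)) ∧ Set.MapsTo π (A.image f) G := by
  have hG : ∀ y ∈ insert x (insert (f x) A), v y ∈ G → y = x ∨ y ∈ A.image f := by
    intro y hy hyG
    rcases mem_insert.1 hy with rfl | hy
    · exact .inl rfl
    rcases mem_insert.1 hy with rfl | hyA
    · exact absurd hyG hvfx
    · exact .inr ((hvA y hyA).1 hyG)
  have hTS : Set.MapsTo v ↑(A.image f ∩ insert x (insert (f x) A)) G := by
    intro y hy
    obtain ⟨hyf, hy⟩ := mem_inter.1 hy
    rcases mem_insert.1 hy with rfl | hy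
    · exact absurd hyf hx
    rcases mem_insert.1 hy with rfl | hyA
    · exact absurd hyf hfx
    · exact (hvA y hyA).2 hyf
  simpa using exists_eqOn_mapsTo_of_card_le (by simpa using hv) hTS
    (card_image_sdiff_le_card_sdiff_image hfx hG hAG)

section Pattern

variable {ι Q : Type*} [Fintype ι] [DecidableEq ι] [Fintype Q] [DecidableEq Q]

def differsEverywhere (c : ι → Q) : Finset (ι → Q) :=
  Fintype.piFinset fun i => {c i}ᶜ

theorem mem_differsEverywhere {c y : ι → Q} : y ∈ differsEverywhere c ↔ ∀ i, y i ≠ c i := by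
  simp [differsEverywhere]

theorem card_differsEverywhere (c : ι → Q) :
    #(differsEverywhere c) = (Fintype.card Q - 1) ^ Fintype.card ι := by
  simp [differsEverywhere, card_compl]

theorem self_notMem_differsEverywhere [Nonempty ι] (c : ι → Q) : c ∉ differsEverywhere c := by
  simp [mem_differsEverywhere]

theorem update_notMem_differsEverywhere [Nontrivial ι] (c : ι → Q) (k : ι) (l : Q) :
    update c k l ∉ differsEverywhere c := by
  obtain ⟨i, hi⟩ := exists_ne k
  simpa [mem_differsEverywhere] using ⟨i, update_of_ne hi l c⟩

theorem update_const_mem_differsEverywhere_iff {o l₁ l₂ : Q} (h₀₁ : o ≠ l₁) (h₀₂ : o ≠ l₂)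
    (h₁₂ : l₁ ≠ l₂) (p : ι → Prop) [DecidablePred p] (k : ι) :
    update (fun _ => o) k l₁ ∈ differsEverywhere (fun i => if p i then l₂ else l₁) ↔ p k := by
  rw [mem_differsEverywhere]
  refine ⟨fun h => by_contra fun hk => h k (by simp [hk]), fun hk i => ?_⟩
  by_cases hik : i = k
  · subst hik
    simp [hk, h₁₂]
  · split_ifs <;> simp [hik, h₀₁, h₀₂]

theorem exists_assignment_of_complete_pattern [Nontrivial ι] {f : (ι → Q) → ι → Q}
    {x : ι → Q} {A : Finset (ι → Q)} (hQ : 3 ≤ Fintype.card Q) (hA : #A = Fintype.card ι)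
    (hxA : x ∉ A) (hfxA : f x ∉ A) (hpat : x ≠ f x ∨ Disjoint A (A.image f)) :
    ∃ (v : (ι → Q) → ι → Q) (a : ι → ι → Q), (∀ j, a j ∈ A) ∧
      (∀ j k, k ≠ j → v x k = v (a j) k) ∧ Set.InjOn v (insert x (insert (f x) A)) ∧
      ∀ y ∈ A, v y ∈ differsEverywhere (v (f x)) ↔ y ∈ A.image f := by
  obtain ⟨o, l₁, l₂, h₀₁, h₀₂, h₁₂⟩ := Fintype.two_lt_card_iff.1 hQ
  let e : A ≃ ι := Fintype.equivOfCardEq (by simpa using hA)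
  let z : ι → Q := fun _ => o
  let c : ι → Q :=
    if x = f x then z else fun i => if (e.symm i : ι → Q) ∈ A.image f then l₂ else l₁
  let v : (ι → Q) → ι → Q := fun y =>
    if y = x then z else if hy : y ∈ A then update z (e ⟨y, hy⟩) l₁ else c
  have hvx : v x = z := if_pos rfl
  have hvA : ∀ y (hy : y ∈ A), v y = update z (e ⟨y, hy⟩) l₁ := fun y hy => by
    simp [v, hy, ne_of_mem_of_not_mem hy hxA]
  have hvfx : v (f x) = c := by
    by_cases hxf : x = f x
    · simp [v, c, ← hxf]
    · simp [v, Ne.symm hxf, hfxA]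
  have hc : x ≠ f x → ∀ i, c i ≠ o := fun hxf i => by
    simp only [c, if_neg hxf]
    split_ifs <;> simp [h₀₁.symm, h₀₂.symm]
  have hinj : Set.InjOn v (insert x (insert (f x) A)) := by
    refine Set.injOn_insert_insert hxA hfxA (fun y hy y' hy' h => ?_) ?_ ?_ ?_
    · rw [hvA y hy, hvA y' hy'] at h
      exact congrArg Subtype.val (e.injective (update_const_injective h₀₁ h))
    · rintro ⟨y, hy, h⟩
      exact update_ne_self_iff.2 h₀₁.symm (by rw [← hvA y hy, h, hvx])
    · rintro hxf ⟨y, hy, h⟩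
      exact update_const_ne_of_forall_ne (hc hxf) _ (by rw [← hvA y hy, h, hvfx])
    · exact fun hxf h => hc hxf (Classical.arbitrary ι) (by rw [← hvfx, ← h, hvx])
  refine ⟨v, fun k => e.symm k, fun k => (e.symm k).2, fun j k hkj => ?_, hinj, fun y hy => ?_⟩
  · simp [hvx, hvA _ (e.symm j).2, z, update_of_ne hkj]
  rw [hvA y hy, hvfx]
  by_cases hxf : x = f x
  · simp only [c, if_pos hxf]
    exact iff_of_false (update_notMem_differsEverywhere _ _ _)
      (disjoint_left.1 (hpat.resolve_left (not_not.2 hxf)) hy)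
  · simp only [c, if_neg hxf]
    rw [update_const_mem_differsEverywhere_iff h₀₁ h₀₂ h₁₂]
    simp

theorem exists_perm_separating_of_complete_pattern [Nontrivial ι] {f : (ι → Q) → ι → Q}
    {x : ι → Q} {A : Finset (ι → Q)} (hQ : 3 ≤ Fintype.card Q) (hA : #A = Fintype.card ι)
    (hx : x ∉ A ∪ A.image f) (hfx : f x ∉ A ∪ A.image f)
    (hpat : x ≠ f x ∨ Disjoint A (A.image f)) :
    ∃ (π : Perm (ι → Q)) (a : ι → ι → Q),
      (∀ j k, k ≠ j → π x k = π (a j) k) ∧ ∀ i j, π (f x) i ≠ π (f (a j)) i := by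
  rw [mem_union, not_or] at hx hfx
  obtain ⟨v, a, haA, hagree, hinj, hvA⟩ :=
    exists_assignment_of_complete_pattern hQ hA hx.1 hfx.1 hpat
  have hAG : #A < #(differsEverywhere (v (f x))) := by
    rw [card_differsEverywhere, hA]
    exact Nat.lt_two_pow_self.trans_le (Nat.pow_le_pow_left (by omega) _)
  obtain ⟨π, hπv, hπG⟩ := Perm.exists_eqOn_mapsTo_image hx.2 hfx.2 hinj hvA
    (self_notMem_differsEverywhere _) hAG
  refine ⟨π, a, fun j k hkj => ?_, fun i j => ?_⟩
  · rw [hπv (by simp), hπv (by simp [haA j]), hagree j k hkj]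
  · rw [hπv (by simp)]
    exact (mem_differsEverywhere.1 (hπG (mem_image_of_mem f (haA j))) i).symm

end Pattern

theorem complete_of_complete_pattern {n q : ℕ} (hq : 3 ≤ q) (hn : 2 ≤ n)
    (f : (Fin n → Fin q) → (Fin n → Fin q))
    (x : Fin n → Fin q) (A : Finset (Fin n → Fin q))
    (hA : A.card = n)
    (hx : x ∉ A ∪ A.image f) (hfx : f x ∉ A ∪ A.image f)
    (hpat : x ≠ f x ∨ Disjoint A (A.image f)) :
    ∃ π : Equiv.Perm (Fin n → Fin q),
      ∀ i j : Fin n, Depends (fun y => π (f (π.symm y))) j i := by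
  have : Nontrivial (Fin n) := Fin.nontrivial_iff_two_le.2 hn
  obtain ⟨π, a, hagree, hsep⟩ := exists_perm_separating_of_complete_pattern (Q := Fin q)
    (by simpa using hq) (by simpa using hA) hx hfx hpat
  exact ⟨π, fun i j => ⟨π x, π (a j), hagree j, by simpa using hsep i j⟩⟩
end

section
/- Let f : Q^n → Q^n with f not the identity. If f has at least 2n fixed points, then there exists h isomorphic to f whose interaction graph is the complete digraph K_n. -/
open Finset

/-!
Conjugation only relabels points, so `h = π ∘ f ∘ π⁻¹` may be prescribed on a few points: a
non-fixed point `a` and its image `f a` let `h` send `0` to a constant vector `c` with no zero entry,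
and `2n - 1` fixed points other than `f a` let `h` fix the vectors `e_j` and `e_{i₀} + e_i`
(`i ≠ i₀`). Then `0` and `e_j` witness every arc `j → i` with `i ≠ j`, while `e_{i₀}`,
`e_{i₀} + e_i` witness the loop at `i ≠ i₀` and `e_k`, `e_k + e_{i₀}` the loop at `i₀`. For `q = 2`,
`c` is the all-ones vector, which avoids these `2n - 1` points only when `n ≥ 3`; this holds since
`2n < 2ⁿ` when `f ≠ id`.
-/

theorem Set.InjOn.exists_perm_eqOn {α : Type*} [Fintype α] {s : Finset α} {ρ : α → α}
    (hρ : Set.InjOn ρ s) : ∃ σ : Equiv.Perm α, Set.EqOn σ ρ s := by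
  classical
  obtain ⟨g, hg⟩ :=
    Finset.exists_equiv_extend_of_card_eq Finset.card_univ.symm (Finset.subset_univ _) hρ
  exact ⟨g.trans (Equiv.subtypeUnivEquiv Finset.mem_univ), hg⟩

/-- `o` is relabelled as the non-fixed point `a`, `c` as `f a`, and `S` as fixed points other than
`f a`. -/
theorem exists_perm_conj_apply_eq {α : Type*} [Fintype α] [DecidableEq α] {f : α → α} {a : α}
    (ha : f a ≠ a) {o c : α} {S : Finset α} (hoc : o ≠ c) (ho : o ∉ S) (hc : c ∉ S)
    (hS : #S < #(univ.filter fun x => f x = x)) :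
    ∃ π : Equiv.Perm α, π (f (π.symm o)) = c ∧ ∀ x ∈ S, π (f (π.symm x)) = x := by
  set T := (univ.filter fun x => f x = x).erase (f a)
  have hST : Fintype.card S ≤ Fintype.card T := by
    simp only [Fintype.card_coe, T]
    have := pred_card_le_card_erase (s := univ.filter fun x => f x = x) (a := f a)
    omega
  obtain ⟨g⟩ := Function.Embedding.nonempty_of_card_le hST
  have hgT (x : S) : f (g x) = g x ∧ (g x : α) ≠ f a := by
    have := (g x).2
    simp only [T, mem_erase, mem_filter, mem_univ, true_and] at this
    exact this.symm
  let ρ : α → α := fun x => if hx : x ∈ S then g ⟨x, hx⟩ else if x = o then a else f a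
  have hρS : ∀ x (hx : x ∈ S), ρ x = g ⟨x, hx⟩ := fun x hx => dif_pos hx
  have hρo : ρ o = a := by simp [ρ, ho]
  have hρc : ρ c = f a := by simp [ρ, hc, hoc.symm]
  have hinj : Set.InjOn ρ ↑(insert o (insert c S)) := by
    have hcS : c ∉ (S : Set α) := hc
    have hoS : o ∉ (insert c (S : Set α)) := by simp [hoc, ho]
    rw [coe_insert, coe_insert, Set.injOn_insert hoS, Set.injOn_insert hcS]
    refine ⟨⟨fun x hx y hy hxy => ?_, ?_⟩, ?_⟩
    · rw [hρS x hx, hρS y hy] at hxy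
      simpa using g.injective (Subtype.ext hxy)
    · rintro ⟨x, hx, hxc⟩
      rw [hρS x hx, hρc] at hxc
      exact (hgT ⟨x, hx⟩).2 hxc
    · rintro ⟨x, hx | hx, hxo⟩
      · rw [hx, hρc, hρo] at hxo
        exact ha hxo
      · rw [hρS x hx, hρo] at hxo
        exact ha (hxo ▸ (hgT ⟨x, hx⟩).1)
  obtain ⟨σ, hσ⟩ := hinj.exists_perm_eqOn
  refine ⟨σ.symm, ?_, fun x hx => ?_⟩
  · rw [Equiv.symm_symm, hσ (mem_insert_self _ _), hρo, ← hρc, ← hσ (by simp),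
      Equiv.symm_apply_apply]
  · rw [Equiv.symm_symm, hσ (by simp [hx]), hρS x hx, (hgT ⟨x, hx⟩).1, ← hρS x hx,
      ← hσ (by simp [hx]), Equiv.symm_apply_apply]

section TestPoints

variable {n q : ℕ}

theorem depends_of_apply_update_ne {h : (Fin n → Fin q) → (Fin n → Fin q)} {i j : Fin n}
    (x : Fin n → Fin q) (v : Fin q) (hx : h x i ≠ h (Function.update x j v) i) :
    Depends h j i :=
  ⟨x, Function.update x j v, fun _ hk => (Function.update_of_ne hk _ _).symm, hx⟩

def unitVec (z u : Fin q) (j : Fin n) : Fin n → Fin q :=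
  Function.update (fun _ => z) j u

def testPoints (z u : Fin q) (i₀ : Fin n) : Finset (Fin n → Fin q) :=
  univ.image (unitVec z u) ∪ (univ.erase i₀).image fun i => Function.update (unitVec z u i₀) i u

variable {z u : Fin q} {i₀ : Fin n}

theorem card_testPoints_le : #(testPoints z u i₀) ≤ 2 * n - 1 := by
  calc #(testPoints z u i₀)
      ≤ #(univ.image (unitVec z u)) + #((univ.erase i₀).image
          fun i => Function.update (unitVec z u i₀) i u) := card_union_le _ _
    _ ≤ n + (n - 1) := by
      gcongr
      · exact card_image_le.trans_eq (by simp)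
      · exact card_image_le.trans_eq (by simp)
    _ = 2 * n - 1 := by have := i₀.pos; omega

theorem const_notMem_testPoints {c : Fin q} (hc : c ≠ u ∨ c ≠ z ∧ 2 < n) :
    (fun _ => c) ∉ testPoints z u i₀ := by
  simp only [testPoints, mem_union, mem_image, mem_univ, true_and, mem_erase, not_or, not_exists,
    not_and, funext_iff, not_forall]
  refine ⟨fun j => ?_, fun i _ => ?_⟩ <;> rcases hc with hcu | ⟨hcz, hn⟩
  · exact ⟨j, by simpa [unitVec] using Ne.symm hcu⟩
  · obtain ⟨k, hkj, -⟩ := Fin.exists_ne_and_ne_of_two_lt j j hn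
    exact ⟨k, by simpa [unitVec, hkj] using Ne.symm hcz⟩
  · exact ⟨i, by simpa using Ne.symm hcu⟩
  · obtain ⟨k, hki, hki₀⟩ := Fin.exists_ne_and_ne_of_two_lt i i₀ hn
    exact ⟨k, by simpa [unitVec, hki, hki₀] using Ne.symm hcz⟩

theorem depends_of_forall_mem_testPoints {h : (Fin n → Fin q) → (Fin n → Fin q)} {c : Fin q}
    (hn : 2 ≤ n) (hzu : z ≠ u) (hcz : c ≠ z) (hO : h (fun _ => z) = fun _ => c)
    (hS : ∀ x ∈ testPoints z u i₀, h x = x) (i j : Fin n) : Depends h j i := by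
  have hE (j : Fin n) : h (unitVec z u j) = unitVec z u j := hS _ (by simp [testPoints])
  have hY (i : Fin n) (hi : i ≠ i₀) :
      h (Function.update (unitVec z u i₀) i u) = Function.update (unitVec z u i₀) i u :=
    hS _ (by simp [testPoints]; exact Or.inr ⟨i, hi, rfl⟩)
  rcases eq_or_ne i j with rfl | hij
  · rcases ne_or_eq i i₀ with hi | rfl
    · refine depends_of_apply_update_ne (unitVec z u i₀) u ?_
      rw [hE, hY i hi]
      simp [unitVec, hi, hzu]
    · have : Nontrivial (Fin n) := Fin.nontrivial_iff_two_le.mpr hn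
      obtain ⟨k, hk⟩ := exists_ne i
      refine depends_of_apply_update_ne (unitVec z u k) u ?_
      have hswap : Function.update (unitVec z u k) i u = Function.update (unitVec z u i) k u :=
        Function.update_comm (β := fun _ => Fin q) hk u u _
      rw [hE, hswap, hY k hk]
      simp [unitVec, Ne.symm hk, hzu]
  · refine depends_of_apply_update_ne (fun _ => z) u ?_
    rw [hO, ← unitVec, hE]
    simp [unitVec, hij, hcz]

end TestPoints

theorem complete_of_many_fixed_points {n q : ℕ} (hn : 2 ≤ n) (hq : 2 ≤ q)
    (f : (Fin n → Fin q) → (Fin n → Fin q)) (hid : f ≠ id)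
    (hfix : 2 * n ≤ (univ.filter (fun x : Fin n → Fin q => f x = x)).card) :
    ∃ π : Equiv.Perm (Fin n → Fin q),
      ∀ i j : Fin n, Depends (fun y => π (f (π.symm y))) j i := by
  obtain ⟨a, ha⟩ := Function.ne_iff.mp hid
  have hpow : 2 * n < q ^ n := hfix.trans_lt <| by
    simpa using card_lt_card (filter_ssubset (p := fun x => f x = x) |>.mpr ⟨a, mem_univ a, ha⟩)
  let i₀ : Fin n := ⟨0, by omega⟩
  let z : Fin q := ⟨0, by omega⟩
  let u : Fin q := ⟨1, by omega⟩
  let c : Fin q := ⟨q - 1, by omega⟩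
  have hzu : z ≠ u := by simp [z, u, Fin.ext_iff]
  have hcz : c ≠ z := by simp [c, z, Fin.ext_iff]; omega
  have hc : c ≠ u ∨ c ≠ z ∧ 2 < n := by
    rcases (by omega : q = 2 ∨ 2 < q) with rfl | hq3
    · refine Or.inr ⟨hcz, ?_⟩
      by_contra! hn2
      obtain rfl : n = 2 := by omega
      norm_num at hpow
    · exact Or.inl (by simp [c, u, Fin.ext_iff]; omega)
  obtain ⟨π, hO, hS⟩ := exists_perm_conj_apply_eq ha (fun h => hcz (congrFun h i₀).symm)
    (const_notMem_testPoints (Or.inl hzu)) (const_notMem_testPoints hc)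
    ((card_testPoints_le (i₀ := i₀)).trans_lt (by omega))
  exact ⟨π, depends_of_forall_mem_testPoints hn hzu hcz hO hS⟩
end

section
/- Let f : Q^n → Q^n. If f has at least n limit cycles of length at least 3 (i.e., n disjoint periodic orbits each of length ≥ 3), then there exists h isomorphic to f whose interaction graph is the complete digraph K_n. -/
/-!
If `h` sends `x ↦ y ↦ z`, where `x, y` differ only in coordinate `j` and `y, z` differ in every
coordinate, then every coordinate of `h` depends on `j`. The first three points
`a j, f (a j), f (f (a j))` of the `n` cycles are `3n` distinct points (so `3n ≤ qⁿ`), and any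
injective relabelling of them extends to a permutation of `Qⁿ`. So it suffices to find `3n`
distinct words `u j, v j, w j` of this shape. For `n ≥ 4` two letters suffice: the indicators of
`{j, j + 1}` and `{j + 1}` and the complement of the latter. For `n ≤ 3` the bound `3n ≤ qⁿ` gives
`q ≥ 3`, and one-hot words over three letters (constant words if `n = 1`) do it.
-/

open Finset

open Function

theorem Function.IsPeriodicPt.minimalPeriod_eq {α : Type*} {f : α → α} {x : α} {p : ℕ}
    (hp : 0 < p) (hx : IsPeriodicPt f p x) (hmin : ∀ t, 0 < t → t < p → f^[t] x ≠ x) :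
    minimalPeriod f x = p := by
  refine (hx.minimalPeriod_le hp).antisymm (not_lt.mp fun hlt => ?_)
  exact hmin _ (hx.minimalPeriod_pos hp) hlt iterate_minimalPeriod

theorem injective_iterate_of_le_minimalPeriod {ι α : Type*} {f : α → α} {a : ι → α} {k : ℕ}
    (hk : ∀ m, k ≤ minimalPeriod f (a m))
    (hdisj : ∀ m m', m ≠ m' → ∀ s t : ℕ, f^[s] (a m) ≠ f^[t] (a m')) :
    Injective fun p : ι × Fin k => f^[p.2] (a p.1) := by
  rintro ⟨m, s⟩ ⟨m', t⟩ h
  obtain rfl | hm := eq_or_ne m m'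
  · have hs : (s : ℕ) < minimalPeriod f (a m) := s.2.trans_le (hk m)
    have ht : (t : ℕ) < minimalPeriod f (a m) := t.2.trans_le (hk m)
    simpa [Fin.ext_iff] using iterate_injOn_Iio_minimalPeriod hs ht h
  · exact absurd h (hdisj m m' hm s t)

section CompleteWitness

variable {ι α : Type*}

structure CompleteWitness (u v w : ι → ι → α) : Prop where
  injective : Injective fun p : ι × Fin 3 => ![u, v, w] p.2 p.1
  eq_of_ne : ∀ j k, k ≠ j → u j k = v j k
  ne : ∀ j i, v j i ≠ w j i

theorem injective_fin_three {u v w : ι → α} (hu : Injective u) (hv : Injective v)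
    (hw : Injective w) (huv : ∀ i j, u i ≠ v j) (huw : ∀ i j, u i ≠ w j)
    (hvw : ∀ i j, v i ≠ w j) :
    Injective fun p : ι × Fin 3 => ![u, v, w] p.2 p.1 := by
  rintro ⟨i, s⟩ ⟨j, t⟩ h
  fin_cases s <;> fin_cases t <;>
    simp_all [hu.eq_iff, hv.eq_iff, hw.eq_iff, (huv _ _).symm, (huw _ _).symm, (hvw _ _).symm]

theorem CompleteWitness.of_isEmpty [IsEmpty ι] (u v w : ι → ι → α) : CompleteWitness u v w :=
  ⟨fun p => isEmptyElim p.1, isEmptyElim, isEmptyElim⟩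

theorem completeWitness_of_subsingleton [Subsingleton ι] {z₀ z₁ z₂ : α} (h₀₁ : z₀ ≠ z₁)
    (h₀₂ : z₀ ≠ z₂) (h₁₂ : z₁ ≠ z₂) :
    CompleteWitness (fun _ _ : ι => z₀) (fun _ _ => z₁) (fun _ _ => z₂) := by
  refine ⟨injective_fin_three (fun _ _ _ => Subsingleton.elim _ _)
    (fun _ _ _ => Subsingleton.elim _ _) (fun _ _ _ => Subsingleton.elim _ _)
    (fun i _ h => h₀₁ (congrFun h i)) (fun i _ h => h₀₂ (congrFun h i))
    (fun i _ h => h₁₂ (congrFun h i)), fun j k hk => absurd (Subsingleton.elim k j) hk,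
    fun _ _ => h₁₂⟩

theorem injective_ite_eq [DecidableEq ι] {a b : α} (hab : a ≠ b) :
    Injective fun j (k : ι) => if k = j then a else b := by
  intro j j' h
  by_contra hne
  simpa [hne, hab] using congrFun h j

theorem ite_eq_ne_ite_eq [DecidableEq ι] {a b a' b' : α} (ha : a ≠ a') (hb : a ≠ b') (j j' : ι) :
    (fun k => if k = j then a else b) ≠ fun k => if k = j' then a' else b' := by
  intro h
  have hj := congrFun h j
  split_ifs at hj <;> simp_all

theorem exists_ne_ne_ne [Fintype ι] [DecidableEq ι] (hcard : 3 < Fintype.card ι) (a b c : ι) :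
    ∃ k, k ≠ a ∧ k ≠ b ∧ k ≠ c := by
  obtain ⟨k, -, hk⟩ := exists_mem_notMem_of_card_lt_card (s := {a, b, c}) (t := univ)
    (card_le_three.trans_lt (by simpa using hcard))
  simp only [mem_insert, mem_singleton, not_or] at hk
  exact ⟨k, hk⟩

theorem completeWitness_of_nontrivial [DecidableEq ι] [Nontrivial ι] {z₀ z₁ z₂ : α}
    (h₀₁ : z₀ ≠ z₁) (h₀₂ : z₀ ≠ z₂) (h₁₂ : z₁ ≠ z₂) :
    CompleteWitness (fun j k : ι => if k = j then z₂ else z₀) (fun j k => if k = j then z₁ else z₀)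
      (fun j k => if k = j then z₂ else z₁) := by
  have huw : ∀ i j : ι,
      (fun k => if k = i then z₂ else z₀) ≠ fun k => if k = j then z₂ else z₁ := by
    intro i j h
    obtain rfl | hij := eq_or_ne i j
    · obtain ⟨k, hk⟩ := exists_ne i
      simpa [hk, h₀₁] using congrFun h k
    · simpa [hij.symm, h₀₂] using congrFun h j
  refine ⟨injective_fin_three (injective_ite_eq h₀₂.symm) (injective_ite_eq h₀₁.symm)
    (injective_ite_eq h₁₂.symm) (ite_eq_ne_ite_eq h₁₂.symm h₀₂.symm) huw
    (fun i j => (ite_eq_ne_ite_eq h₁₂.symm h₀₂.symm j i).symm), fun j k hk => by simp [hk],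
    fun j i => ?_⟩
  split_ifs
  exacts [h₁₂, h₀₁]

theorem completeWitness_of_four_le_card [Fintype ι] [DecidableEq ι] (hcard : 4 ≤ Fintype.card ι)
    {p : ι → ι} (hp : Injective p) (hp₁ : ∀ j, p j ≠ j) (hp₂ : ∀ j, p (p j) ≠ j) {z₀ z₁ : α}
    (h₀₁ : z₀ ≠ z₁) :
    CompleteWitness (fun j k => if k = j ∨ k = p j then z₁ else z₀)
      (fun j k => if k = p j then z₁ else z₀) (fun j k => if k = p j then z₀ else z₁) := by
  have hu : Injective fun j k => if k = j ∨ k = p j then z₁ else z₀ := by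
    intro i j h
    by_contra hij
    have hi : i = p j := by simpa [hij, h₀₁.symm] using congrFun h i
    have hj : j = p i := by simpa [Ne.symm hij, h₀₁] using congrFun h j
    exact hp₂ i (by rw [← hj, ← hi])
  have huv : ∀ i j, (fun k => if k = i ∨ k = p i then z₁ else z₀) ≠
      fun k => if k = p j then z₁ else z₀ := by
    intro i j h
    have hi : i = p j := by simpa [h₀₁.symm] using congrFun h i
    have hpi : p i = p j := by simpa [h₀₁.symm] using congrFun h (p i)
    exact hp₁ i (hi.trans hpi.symm).symm
  refine ⟨injective_fin_three hu ((injective_ite_eq h₀₁.symm).comp hp)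
    ((injective_ite_eq h₀₁).comp hp) huv (fun i j h => ?_) (fun i j h => ?_),
    fun j k hk => by simp [hk], fun j i => by split_ifs <;> simp [h₀₁, h₀₁.symm]⟩
  all_goals
    obtain ⟨k, hki, hkpi, hkpj⟩ := exists_ne_ne_ne hcard i (p i) (p j)
    simpa [hki, hkpi, hkpj, h₀₁] using congrFun h k

end CompleteWitness

theorem CompleteWitness.depends {n q : ℕ} {u v w : Fin n → Fin n → Fin q}
    (hW : CompleteWitness u v w) {h : (Fin n → Fin q) → (Fin n → Fin q)}
    (hu : ∀ j, h (u j) = v j) (hv : ∀ j, h (v j) = w j) (i j : Fin n) : Depends h j i :=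
  ⟨u j, v j, hW.eq_of_ne j, by rw [hu, hv]; exact hW.ne j i⟩

theorem two_le_of_three_mul_le_pow {n q : ℕ} (h : 3 * n ≤ q ^ n) (hn : 0 < n) : 2 ≤ q := by
  by_contra! hq
  interval_cases q <;> simp [hn.ne'] at h; omega

theorem three_le_of_three_mul_le_pow {n q : ℕ} (h : 3 * n ≤ q ^ n) (hn : 0 < n) (hn₄ : n < 4) :
    3 ≤ q := by
  by_contra! hq
  obtain rfl : q = 2 := by have := two_le_of_three_mul_le_pow h hn; omega
  interval_cases n <;> simp at h

theorem exists_completeWitness {n q : ℕ} (h : 3 * n ≤ q ^ n) :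
    ∃ u v w : Fin n → Fin n → Fin q, CompleteWitness u v w := by
  obtain rfl | hn := n.eq_zero_or_pos
  · exact ⟨isEmptyElim, isEmptyElim, isEmptyElim, .of_isEmpty _ _ _⟩
  obtain hn₄ | hn₄ := le_or_gt 4 n
  · obtain ⟨m, rfl⟩ : ∃ m, n = m + 4 := ⟨n - 4, by omega⟩
    have hq := two_le_of_three_mul_le_pow h hn
    refine ⟨_, _, _, completeWitness_of_four_le_card (by simp) (p := fun j : Fin (m + 4) => j + 1)
      (add_left_injective 1) (fun j => ?_) (fun j => ?_)
      ((Fin.castLE_injective hq).ne (show (0 : Fin 2) ≠ 1 by decide))⟩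
    all_goals
      simp only [ne_eq, Fin.ext_iff, Fin.val_add_one, Fin.val_last]
      split_ifs <;> omega
  · have hq := three_le_of_three_mul_le_pow h hn hn₄
    have hz : ∀ s t : Fin 3, s ≠ t → Fin.castLE hq s ≠ Fin.castLE hq t :=
      fun _ _ => (Fin.castLE_injective hq).ne
    obtain rfl | hn₂ := (Nat.succ_le_of_lt hn).eq_or_lt
    · exact ⟨_, _, _, completeWitness_of_subsingleton (hz 0 1 (by decide)) (hz 0 2 (by decide))
        (hz 1 2 (by decide))⟩
    · have : Nontrivial (Fin n) := Fin.nontrivial_iff_two_le.mpr hn₂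
      exact ⟨_, _, _, completeWitness_of_nontrivial (hz 0 1 (by decide)) (hz 0 2 (by decide))
        (hz 1 2 (by decide))⟩

theorem complete_of_many_limit_cycles {n q : ℕ}
    (f : (Fin n → Fin q) → (Fin n → Fin q))
    (a : Fin n → (Fin n → Fin q))
    -- each `a m` is a periodic point whose minimal period (the limit cycle length) is ≥ 3
    (ha : ∀ m : Fin n, ∃ p, 3 ≤ p ∧ f^[p] (a m) = a m ∧
      ∀ t, 0 < t → t < p → f^[t] (a m) ≠ a m)
    -- the limit cycles (orbits) are pairwise distinct/disjoint
    (hdisj : ∀ m m' : Fin n, m ≠ m' → ∀ s t : ℕ, f^[s] (a m) ≠ f^[t] (a m')) :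
    ∃ π : Equiv.Perm (Fin n → Fin q),
      ∀ i j : Fin n, Depends (fun y => π (f (π.symm y))) j i := by
  have hperiod : ∀ m, 3 ≤ minimalPeriod f (a m) := fun m => by
    obtain ⟨p, hp, hfix, hmin⟩ := ha m
    rwa [IsPeriodicPt.minimalPeriod_eq (by omega) hfix hmin]
  have horbit := injective_iterate_of_le_minimalPeriod hperiod hdisj
  obtain ⟨u, v, w, hW⟩ := exists_completeWitness (n := n) (q := q)
    (by simpa [mul_comm] using Fintype.card_le_of_injective _ horbit)
  obtain ⟨π, hπ⟩ := Equiv.Perm.exists_extending_pair _ _ horbit hW.injective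
  have h₀ : ∀ j, π (a j) = u j := fun j => hπ (j, 0)
  have h₁ : ∀ j, π (f (a j)) = v j := fun j => hπ (j, 1)
  have h₂ : ∀ j, π (f (f (a j))) = w j := fun j => hπ (j, 2)
  refine ⟨π, hW.depends (fun j => ?_) (fun j => ?_)⟩
  · rw [← h₀, π.symm_apply_apply, h₁]
  · rw [← h₁, π.symm_apply_apply, h₂]
end

section
/- Let f : Q^n → Q^n with n ≥ 5 and f not constant. If f has an independent set A (a set with f(A) ∩ A = ∅) with |A| > n and |f(A)| = 1, then there exists h isomorphic to f whose interaction graph is K_n. -/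
/-!
Let `f(A) = {c}` and pick `z` with `f z ≠ c`. Take `n` points `a j` of `A` other than `f z` and
relabel `Q^n` by a permutation `π` with `π z = 0`, `π (a j) = e_j`, `π c = 𝟙_T`, `π (f z) = 𝟙_{Tᶜ}`.
Then `h = π f π⁻¹` sends `e_j` to `𝟙_T` and `0` to `𝟙_{Tᶜ}`, which differ in every coordinate, so
every `j` influences every `i`. For `π` to exist, `T` is `∅` if `z = c`, `univ` if `z = f z`, and
a pair otherwise; `n ≥ 4` makes `T` and `Tᶜ` differ from every `e_j`.
-/

open Finset

theorem Finset.exists_notMem_forall_eq_of_disjoint_image {α : Type*} [DecidableEq α] {f : α → α}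
    {A : Finset α} (hind : Disjoint (A.image f) A) (himg : #(A.image f) = 1) :
    ∃ c ∉ A, ∀ a ∈ A, f a = c := by
  obtain ⟨c, hc⟩ := card_eq_one.mp himg
  exact ⟨c, disjoint_left.mp hind (by simp [hc]),
    fun a ha => mem_singleton.mp (hc ▸ mem_image_of_mem f ha)⟩

theorem Finset.exists_fin_embedding_mem {α : Type*} {s : Finset α} {n : ℕ} (h : n ≤ #s) :
    ∃ a : Fin n ↪ α, ∀ j, a j ∈ s := by
  obtain ⟨e⟩ := Function.Embedding.nonempty_of_card_le (α := Fin n) (β := s) (by simpa using h)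
  exact ⟨e.trans (.subtype _), fun j => (e j).2⟩

theorem Finset.exists_eq_empty_iff_compl_eq_empty_iff {ι : Type*} [Fintype ι] [DecidableEq ι]
    (hι : 4 ≤ Fintype.card ι) {P Q : Prop} (hPQ : ¬(P ∧ Q)) :
    ∃ T : Finset ι, (P ↔ T = ∅) ∧ (Q ↔ Tᶜ = ∅) ∧ #T ≠ 1 ∧ #Tᶜ ≠ 1 := by
  classical
  obtain ⟨T, -, hT⟩ := exists_subset_card_eq (s := (univ : Finset ι))
    (n := if P then 0 else if Q then Fintype.card ι else 2) (by rw [card_univ]; split_ifs <;> omega)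
  refine ⟨T, ?_⟩
  rw [← card_eq_zero, ← card_eq_zero, card_compl]
  by_cases hP : P <;> by_cases hQ : Q <;>
    simp only [hP, hQ, if_true, if_false, true_iff, false_iff, and_self, not_true] at hT hPQ ⊢ <;>
    omega

theorem Equiv.Perm.exists_apply_eq_of_eq_iff_eq {α ι : Type*} [Finite α] {p w : ι → α}
    (h : ∀ k l, p k = p l ↔ w k = w l) : ∃ π : Equiv.Perm α, ∀ k, π (p k) = w k := by
  classical
  -- `p` and `w` have the same kernel, so both ranges are the same quotient of `ι`.
  let e : Set.range p ≃ Set.range w :=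
    (Setoid.quotientKerEquivRange p).symm.trans
      ((Quotient.congrRight h).trans (Setoid.quotientKerEquivRange w))
  refine ⟨e.extendSubtype, fun k => ?_⟩
  rw [Equiv.extendSubtype_apply_of_mem e (p k) ⟨k, rfl⟩]
  have : (Setoid.quotientKerEquivRange p).symm ⟨p k, ⟨k, rfl⟩⟩ = ⟦k⟧ := by
    rw [Equiv.symm_apply_eq]; rfl
  simp only [e, Equiv.trans_apply, this]
  rfl

theorem Equiv.Perm.exists_apply_eq_of_injective_of_triple {α ι : Type*} [Finite α] {a e : ι → α}
    (ha_inj : a.Injective) (he_inj : e.Injective)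
    {z c d z' c' d' : α} (ha : ∀ j, a j ≠ z ∧ a j ≠ c ∧ a j ≠ d)
    (he : ∀ j, e j ≠ z' ∧ e j ≠ c' ∧ e j ≠ d') (hcd : c ≠ d) (hcd' : c' ≠ d')
    (hzc : z = c ↔ z' = c') (hzd : z = d ↔ z' = d') :
    ∃ π : Equiv.Perm α, π z = z' ∧ π c = c' ∧ π d = d' ∧ ∀ j, π (a j) = e j := by
  have hinr : ∀ m l : Fin 3,
      ![z, c, d] m = ![z, c, d] l ↔ ![z', c', d'] m = ![z', c', d'] l := by
    have hcz : c = z ↔ c' = z' := by rw [eq_comm, hzc, eq_comm]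
    have hdz : d = z ↔ d' = z' := by rw [eq_comm, hzd, eq_comm]
    intro m l
    fin_cases m <;> fin_cases l <;> simp [hzc, hzd, hcz, hdz, hcd, hcd', hcd.symm, hcd'.symm]
  have hmix : ∀ j (m : Fin 3), a j = ![z, c, d] m ↔ e j = ![z', c', d'] m := by
    intro j m
    fin_cases m <;> simp [ha j, he j]
  obtain ⟨π, hπ⟩ := exists_apply_eq_of_eq_iff_eq (p := Sum.elim a ![z, c, d])
    (w := Sum.elim e ![z', c', d']) (by
      rintro (j | m) (k | l)
      · simp [ha_inj.eq_iff, he_inj.eq_iff]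
      · exact hmix j l
      · exact (eq_comm.trans (hmix k m)).trans eq_comm
      · exact hinr m l)
  exact ⟨π, hπ (.inr 0), hπ (.inr 1), hπ (.inr 2), fun j => hπ (.inl j)⟩

section CharVec

variable {ι β : Type*} [DecidableEq ι]

def charVec (b₀ b₁ : β) (s : Finset ι) : ι → β := fun k => if k ∈ s then b₁ else b₀

theorem charVec_injective {b₀ b₁ : β} (hb : b₀ ≠ b₁) :
    Function.Injective (charVec (ι := ι) b₀ b₁) := by
  intro s t hst
  ext k
  have := congrFun hst k
  by_cases hs : k ∈ s <;> by_cases ht : k ∈ t <;> simp_all [charVec, hb.symm]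

theorem charVec_inj {b₀ b₁ : β} (hb : b₀ ≠ b₁) {s t : Finset ι} :
    charVec b₀ b₁ s = charVec b₀ b₁ t ↔ s = t :=
  (charVec_injective hb).eq_iff

theorem charVec_singleton_apply_of_ne (b₀ b₁ : β) {j k : ι} (hk : k ≠ j) :
    charVec b₀ b₁ {j} k = charVec b₀ b₁ ∅ k := by
  simp [charVec, hk]

theorem charVec_apply_ne_compl [Fintype ι] {b₀ b₁ : β} (hb : b₀ ≠ b₁) (s : Finset ι) (k : ι) :
    charVec b₀ b₁ s k ≠ charVec b₀ b₁ sᶜ k := by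
  by_cases hk : k ∈ s <;> simp [charVec, hk, hb, hb.symm]

theorem exists_perm_apply_eq_charVec [Fintype ι] [Finite β] {b₀ b₁ : β} (hb : b₀ ≠ b₁)
    (hι : 4 ≤ Fintype.card ι) {a : ι → ι → β} (ha_inj : a.Injective) {z c d : ι → β}
    (ha : ∀ j, a j ≠ z ∧ a j ≠ c ∧ a j ≠ d) (hcd : c ≠ d) :
    ∃ π : Equiv.Perm (ι → β), ∃ T : Finset ι, π z = charVec b₀ b₁ ∅ ∧ π c = charVec b₀ b₁ T ∧
      π d = charVec b₀ b₁ Tᶜ ∧ ∀ j, π (a j) = charVec b₀ b₁ {j} := by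
  have : Nonempty ι := Fintype.card_pos_iff.mp (by omega)
  obtain ⟨T, hTc, hTd, hT1, hTc1⟩ := exists_eq_empty_iff_compl_eq_empty_iff hι
    (P := z = c) (Q := z = d) fun ⟨hzc, hzd⟩ => hcd (hzc ▸ hzd)
  have he : ∀ j : ι, charVec b₀ b₁ {j} ≠ charVec b₀ b₁ ∅ ∧
      charVec b₀ b₁ {j} ≠ charVec b₀ b₁ T ∧ charVec b₀ b₁ {j} ≠ charVec b₀ b₁ Tᶜ := by
    simp only [Ne, charVec_inj hb]
    exact fun j => ⟨singleton_ne_empty j, fun h => hT1 (h ▸ card_singleton j),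
      fun h => hTc1 (h ▸ card_singleton j)⟩
  obtain ⟨π, hπ⟩ := Equiv.Perm.exists_apply_eq_of_injective_of_triple
    (e := fun j => charVec b₀ b₁ {j}) ha_inj ((charVec_injective hb).comp singleton_injective)
    ha he hcd
    (by rw [Ne, charVec_inj hb]; exact ne_compl_self)
    (by rw [charVec_inj hb, hTc, eq_comm]) (by rw [charVec_inj hb, hTd, eq_comm])
  exact ⟨π, T, hπ⟩

end CharVec

theorem depends_of_charVec {n q : ℕ} {b₀ b₁ : Fin q} (hb : b₀ ≠ b₁)
    {h : (Fin n → Fin q) → (Fin n → Fin q)} {T : Finset (Fin n)}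
    (h₀ : h (charVec b₀ b₁ ∅) = charVec b₀ b₁ Tᶜ)
    (h₁ : ∀ j, h (charVec b₀ b₁ {j}) = charVec b₀ b₁ T) (i j : Fin n) : Depends h j i :=
  ⟨charVec b₀ b₁ {j}, charVec b₀ b₁ ∅, fun _ hk => charVec_singleton_apply_of_ne b₀ b₁ hk,
    by rw [h₁, h₀]; exact charVec_apply_ne_compl hb T i⟩

theorem complete_of_independent_set_image_one {n q : ℕ} (hn : 5 ≤ n) (hq : 2 ≤ q)
    (f : (Fin n → Fin q) → (Fin n → Fin q))
    (hconst : ¬ ∃ c, f = fun _ => c)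
    (A : Finset (Fin n → Fin q))
    (hind : Disjoint (A.image f) A)
    (hcard : n < A.card) (himg : (A.image f).card = 1) :
    ∃ π : Equiv.Perm (Fin n → Fin q),
      ∀ i j : Fin n, Depends (fun y => π (f (π.symm y))) j i := by
  obtain ⟨c, hcA, hfA⟩ := exists_notMem_forall_eq_of_disjoint_image hind himg
  obtain ⟨z, hz⟩ : ∃ z, f z ≠ c := by
    by_contra! h
    exact hconst ⟨c, funext h⟩
  obtain ⟨a, ha⟩ := exists_fin_embedding_mem (s := A.erase (f z)) (n := n)
    (by have := pred_card_le_card_erase (s := A) (a := f z); omega)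
  have haA j : a j ∈ A := mem_of_mem_erase (ha j)
  have hb : (⟨0, by omega⟩ : Fin q) ≠ ⟨1, by omega⟩ := by simp [Fin.ext_iff]
  obtain ⟨π, T, hπz, hπc, hπfz, hπa⟩ := exists_perm_apply_eq_charVec hb
    (by rw [Fintype.card_fin]; omega) a.injective (z := z) (c := c) (d := f z)
    (fun j => ⟨fun h => hz (h ▸ hfA _ (haA j)), fun h => hcA (h ▸ haA j), ne_of_mem_erase (ha j)⟩)
    (fun h => hz (h ▸ rfl))
  refine ⟨π, depends_of_charVec hb (T := T) ?_ fun j => ?_⟩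
  · rw [π.symm_apply_eq.mpr hπz.symm, hπfz]
  · rw [π.symm_apply_eq.mpr (hπa j).symm, hfA _ (haA j), hπc]
end

section
/- Let f : Q^n → Q^n with n ≥ 5. If f has an independent set A with |A| ≥ n + k and |f(A)| = 2k for some 1 ≤ k ≤ n, then there exists h isomorphic to f whose interaction graph is K_n. -/
open Finset

/-!
Pair the `2k` values of `f` on `A` as `(b t, c t)` and work inside the hypercube
`(ZMod 2)ⁿ ⊆ Qⁿ`. The `n + k` points of `A` are laid out, pair by pair, as double stars whose
`n` edges are hypercube edges in pairwise distinct directions, each joining a point of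
`f⁻¹(b t)` to a point of `f⁻¹(c t)`; the stars can be translated apart because
`(n + k)² < 4 · 2ⁿ`. Then `b t` and `c t` are sent to a pair of antipodal points away from the
stars, which exist because `3n ≤ 2ⁿ⁻¹`. Along the edge in direction `j`, the conjugate of `f`
jumps between antipodal points, so every coordinate depends on `j`.
-/

open Function
open scoped Pointwise

theorem exists_perm_apply_eq_of_injective {I X : Type*} [Finite X] {e p : I → X}
    (he : Injective e) (hp : Injective p) : ∃ π : Equiv.Perm X, ∀ i, π (e i) = p i := by
  classical
  let g : Set.range e ≃ Set.range p :=
    (Equiv.ofInjective e he).symm.trans (Equiv.ofInjective p hp)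
  refine ⟨g.extendSubtype, fun i => ?_⟩
  rw [Equiv.extendSubtype_apply_of_mem g (e i) ⟨i, rfl⟩]
  simp [g]

theorem exists_injective_blockwise_add {V ι W : Type*} [Fintype V] [AddGroup W] [Fintype W]
    (blk : V → ι) (off : V → W) (hoff : ∀ u v, blk u = blk v → off u = off v → u = v)
    (hcard : Fintype.card V ^ 2 < 4 * Fintype.card W) :
    ∃ z : ι → W, Injective fun v => z (blk v) + off v := by
  classical
  suffices h : ∀ s : Finset ι, ∃ z : ι → W,
      Set.InjOn (fun v => z (blk v) + off v) {v | blk v ∈ s} by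
    obtain ⟨z, hz⟩ := h (univ.image blk)
    exact ⟨z, fun u v huv => hz (by simp) (by simp) huv⟩
  intro s
  induction s using Finset.induction_on with
  | empty => exact ⟨0, by simp⟩
  | insert a s ha ih =>
    obtain ⟨z, hz⟩ := ih
    set old := univ.filter (fun v => blk v ∈ s)
    set new := univ.filter (fun v => blk v = a)
    have hsize : #old + #new ≤ Fintype.card V := by
      rw [← card_union_of_disjoint <| disjoint_filter.2
        fun v _ (h : blk v ∈ s) (h' : blk v = a) => ha (h' ▸ h)]
      exact card_le_univ _
    -- the shift `w` of block `a` must avoid these differences, fewer than `#W` by AM-GM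
    have hbad : #(old.image (fun v => z (blk v) + off v) - new.image off) < #(univ : Finset W) :=
      calc _ ≤ #(old.image (fun v => z (blk v) + off v)) * #(new.image off) := card_sub_le
      _ ≤ #old * #new := Nat.mul_le_mul card_image_le card_image_le
      _ < _ := by
        have := four_mul_le_sq_add #old #new
        rw [card_univ]; nlinarith [Nat.pow_le_pow_left hsize 2]
    obtain ⟨w, -, hw⟩ := exists_mem_notMem_of_card_lt_card hbad
    have hz_old : ∀ v, blk v ∈ s → update z a w (blk v) = z (blk v) := fun v hv =>
      update_of_ne (fun h : blk v = a => ha (h ▸ hv)) _ _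
    have hnew_old : ∀ u v, blk u = a → blk v ∈ s → w + off u ≠ z (blk v) + off v :=
      fun u v hu hv h => hw (mem_sub.2 ⟨_, mem_image_of_mem _ (by simpa [old] using hv), off u,
        mem_image_of_mem _ (by simpa [new] using hu), by rw [← h, add_sub_cancel_right]⟩)
    refine ⟨update z a w, ?_⟩
    rintro u hu v hv (huv : update z a w (blk u) + off u = update z a w (blk v) + off v)
    simp only [Set.mem_ofPred_eq, mem_insert] at hu hv
    rcases hu with hu | hu <;> rcases hv with hv | hv
    · rw [hu, hv] at huv
      exact hoff u v (hu.trans hv.symm) (add_left_cancel huv)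
    · rw [hu, update_self, hz_old v hv] at huv
      exact (hnew_old u v hu hv huv).elim
    · rw [hv, update_self, hz_old u hu] at huv
      exact (hnew_old v u hv hu huv.symm).elim
    · rw [hz_old u hu, hz_old v hv] at huv
      exact hz hu hv huv

theorem card_filter_apply_eq_zero_mul_two {D : Type*} [Fintype D] [DecidableEq D] (i : D) :
    #{x : D → ZMod 2 | x i = 0} * 2 = 2 ^ Fintype.card D := by
  have := Fintype.card_filter_piFinset_const (univ : Finset (ZMod 2)) i 0
  rw [Fintype.piFinset_univ, if_pos (mem_univ _), card_univ, ZMod.card] at this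
  rw [this, ← pow_succ, Nat.sub_add_cancel (Fintype.card_pos_iff.2 ⟨i⟩)]

theorem exists_antipodal_pairs_avoiding {β D : Type*} [Fintype β] [Fintype D] [Nonempty D]
    (P : Finset (D → ZMod 2)) (hP : 2 * (#P + Fintype.card β) ≤ 2 ^ Fintype.card D) :
    ∃ ζ : β × Bool → D → ZMod 2,
      Injective ζ ∧ (∀ x, ζ x ∉ P) ∧ ∀ t i, ζ (t, false) i ≠ ζ (t, true) i := by
  classical
  set i₀ := Classical.arbitrary D
  set even : Finset (D → ZMod 2) := {x | x i₀ = 0} with heven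
  set bad := even.filter fun x => x ∈ P ∨ x + 1 ∈ P with hbad
  have hbad_card : #bad ≤ #P := by
    refine card_le_card_of_injOn (fun x => if x ∈ P then x else x + 1) (fun x hx => ?_) ?_
    · simp only [hbad, coe_filter, Set.mem_ofPred_eq] at hx
      dsimp only
      split_ifs with h
      · exact h
      · exact hx.2.resolve_left h
    · intro x hx y hy hxy
      simp only [hbad, heven, coe_filter, mem_filter, mem_univ, true_and,
        Set.mem_ofPred_eq] at hx hy
      have key : ∀ a b : ZMod 2, a = 0 → b = 0 → a ≠ b + 1 := by decide
      dsimp only at hxy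
      split_ifs at hxy
      · exact hxy
      · exact (key _ _ hx.1 hy.1 (congrFun hxy i₀)).elim
      · exact (key _ _ hy.1 hx.1 (congrFun hxy i₀).symm).elim
      · exact add_right_cancel hxy
  obtain ⟨ξ⟩ : Nonempty (β ↪ ↥(even \ bad)) := by
    refine Function.Embedding.nonempty_of_card_le ?_
    rw [Fintype.card_coe, card_sdiff_of_subset (show bad ⊆ even from filter_subset _ _)]
    have : #even * 2 = _ := card_filter_apply_eq_zero_mul_two i₀
    omega
  have hξ : ∀ t, (ξ t : D → ZMod 2) i₀ = 0 ∧ (ξ t : D → ZMod 2) ∉ P ∧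
      (ξ t : D → ZMod 2) + 1 ∉ P := by
    intro t
    have := (ξ t).2
    simp only [hbad, heven, mem_sdiff, mem_filter, mem_univ, true_and] at this
    tauto
  refine ⟨fun x => ξ x.1 + if x.2 then 1 else 0, ?_, ?_, fun t i => by simp⟩
  · rintro ⟨t, b⟩ ⟨t', b'⟩ h
    have hb : b = b' := by
      have := congrFun h i₀
      cases b <;> cases b' <;> simp [(hξ t).1, (hξ t').1] at this ⊢
    subst hb
    simpa using ξ.injective (Subtype.ext (add_right_cancel h))
  · rintro ⟨t, b⟩
    cases b <;> simp [(hξ t).2]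

theorem exists_star_labelling {α β D : Type*} [Fintype α] [Fintype β] [Fintype D]
    (s : α → β × Bool) (hs : Surjective s) (hβD : Fintype.card β ≤ Fintype.card D)
    (hcard : Fintype.card D + Fintype.card β ≤ Fintype.card α) :
    ∃ el : β ⊕ D → α, Injective el ∧ (∀ t, s (el (.inl t)) = (t, false)) ∧
      ∀ t, ∃ j, s (el (.inr j)) = (t, true) := by
  classical
  choose r hr using fun t => hs (t, false)
  choose c hc using fun t => hs (t, true)
  have hr_inj : Injective r := fun t t' h => by simpa [hr] using congrArg s h
  have hc_inj : Injective c := fun t t' h => by simpa [hc] using congrArg s h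
  have hcr : univ.image c ⊆ (univ.image r)ᶜ := by
    simp only [subset_iff, mem_image, mem_univ, true_and, mem_compl, not_exists]
    rintro _ ⟨t, rfl⟩ t' h
    have := congrArg s h
    simp [hr, hc] at this
  obtain ⟨T, hcT, hTr, hT⟩ := exists_subsuperset_card_eq (n := Fintype.card D) hcr
    (by rwa [card_image_of_injective _ hc_inj, card_univ])
    (by rw [card_compl, card_image_of_injective _ hr_inj, card_univ]; omega)
  let e : D ≃ T := Fintype.equivOfCardEq (by rw [Fintype.card_coe, hT])
  refine ⟨Sum.elim r (fun j => e j), ?_, hr, fun t => ?_⟩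
  · refine hr_inj.sumElim (Subtype.val_injective.comp e.injective) fun t j h => ?_
    exact mem_compl.1 (hTr (e j).2) (h ▸ mem_image_of_mem r (mem_univ t))
  · refine ⟨e.symm ⟨c t, hcT (mem_image_of_mem c (mem_univ t))⟩, ?_⟩
    simp [hc]

theorem exists_star_embedding {α β D : Type*} [Fintype β] [Fintype D] [DecidableEq D]
    (s : α → β × Bool) (el : β ⊕ D → α) (hroot : ∀ t, s (el (.inl t)) = (t, false))
    (σ : β → D) (hσ : ∀ t, s (el (.inr (σ t))) = (t, true))
    (hcard : (Fintype.card β + Fintype.card D) ^ 2 < 4 * 2 ^ Fintype.card D) :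
    ∃ pos : β ⊕ D → D → ZMod 2, Injective pos ∧ ∀ j, ∃ u u' t,
      s (el u) = (t, false) ∧ s (el u') = (t, true) ∧ pos u' = pos u + Pi.single j 1 := by
  let blk : β ⊕ D → β := fun v => (s (el v)).1
  -- Block `t` is a double star: the root sits at `0`, a vertex `j` of the `true` side at `e j`,
  -- and one of the `false` side at `e (σ t) + e j`, next to the centre `σ t`.
  let off : β ⊕ D → D → ZMod 2 := Sum.elim 0 fun j =>
    Pi.single j 1 + if (s (el (.inr j))).2 then 0 else Pi.single (σ (blk (.inr j))) 1
  have hblk_root : ∀ t, blk (.inl t) = t := fun t => by simp [blk, hroot]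
  have hoff_apply : ∀ j x, x ≠ σ (blk (.inr j)) →
      off (.inr j) x = (Pi.single j 1 : D → ZMod 2) x := by
    intro j x hx
    simp only [off, Sum.elim_inr, Pi.add_apply]
    split_ifs <;> simp [hx]
  have hoff_center : ∀ t, off (.inr (σ t)) (σ t) = 1 := fun t => by simp [off, hσ]
  have hsep : ∀ u j, blk u = blk (.inr j) → j ≠ σ (blk (.inr j)) → u ≠ .inr j →
      off u j ≠ off (.inr j) j := by
    rintro (t | j') j hblk hj hne
    · simp [off, hoff_apply j j hj]
    · rw [hoff_apply j j hj, hoff_apply j' j (hblk ▸ hj)]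
      simp_all [Pi.single_apply]
  have hoff : ∀ u v, blk u = blk v → off u = off v → u = v := by
    rintro (t | j) (t' | j') hblk heq <;> by_contra hne
    · simp only [hblk_root] at hblk
      exact hne (hblk ▸ rfl)
    · by_cases hj : j' = σ (blk (.inr j'))
      · have := hoff_center (blk (.inr j'))
        rw [← hj] at this
        simp [← heq, off] at this
      · exact hsep _ j' hblk hj hne (congrFun heq j')
    · by_cases hj : j = σ (blk (.inr j))
      · have := hoff_center (blk (.inr j))
        rw [← hj] at this
        simp [heq, off] at this
      · exact hsep _ j hblk.symm hj (Ne.symm hne) (congrFun heq j).symm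
    · by_cases hj : j = σ (blk (.inr j))
      · by_cases hj' : j' = σ (blk (.inr j'))
        · exact hne (by rw [hj, hj', hblk])
        · exact hsep _ j' hblk hj' hne (congrFun heq j')
      · exact hsep _ j hblk.symm hj (Ne.symm hne) (congrFun heq j).symm
  obtain ⟨z, hz⟩ := exists_injective_blockwise_add blk off hoff
    (by simpa [Fintype.card_sum, ZMod.card] using hcard)
  refine ⟨fun v => z (blk v) + off v, hz, fun j => ?_⟩
  have hs : s (el (.inr j)) = (blk (.inr j), (s (el (.inr j))).2) := rfl
  cases hside : (s (el (.inr j))).2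
  · refine ⟨.inr j, .inr (σ (blk (.inr j))), blk (.inr j), hs.trans (by rw [hside]), hσ _, ?_⟩
    have hcenter : blk (.inr (σ (blk (.inr j)))) = blk (.inr j) := by simp [blk, hσ]
    simp only [off, Sum.elim_inr, hside, hσ, hcenter, if_true, if_false, Bool.false_eq_true,
      add_zero]
    rw [add_assoc, add_comm (Pi.single j 1), add_assoc, ZModModule.add_self, add_zero]
  · refine ⟨.inl (blk (.inr j)), .inr j, blk (.inr j), hroot _, hs.trans (by rw [hside]), ?_⟩
    simp [off, hside, hblk_root]

theorem exists_double_star_placement {α β D : Type*} [Fintype α] [Fintype β] [Fintype D]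
    [DecidableEq D] (s : α → β × Bool) (hs : Surjective s)
    (hβD : Fintype.card β ≤ Fintype.card D)
    (hcard : Fintype.card D + Fintype.card β ≤ Fintype.card α)
    (hcube : (Fintype.card β + Fintype.card D) ^ 2 < 4 * 2 ^ Fintype.card D) :
    ∃ (el : β ⊕ D → α) (pos : β ⊕ D → D → ZMod 2), Injective el ∧ Injective pos ∧
      ∀ j, ∃ u u' t,
        s (el u) = (t, false) ∧ s (el u') = (t, true) ∧ pos u' = pos u + Pi.single j 1 := by
  obtain ⟨el, hel, hroot, hcenter⟩ := exists_star_labelling s hs hβD hcard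
  choose σ hσ using hcenter
  obtain ⟨pos, hpos, hedge⟩ := exists_star_embedding s el hroot σ hσ hcube
  exact ⟨el, pos, hel, hpos, hedge⟩

theorem exists_pairing_of_card_image_eq_two_mul {X : Type*} [DecidableEq X] {k : ℕ}
    (f : X → X) (A : Finset X) (himg : #(A.image f) = 2 * k) :
    ∃ (s : A → Fin k × Bool) (b : Fin k × Bool → X), Surjective s ∧ Injective b ∧
      (∀ x, b x ∈ A.image f) ∧ ∀ a : A, f a = b (s a) := by
  obtain ⟨img⟩ : Nonempty (Fin k × Bool ≃ A.image f) := Fintype.card_eq.1 <| by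
    rw [Fintype.card_prod, Fintype.card_fin, Fintype.card_bool, Fintype.card_coe, himg, mul_comm]
  refine ⟨fun a => img.symm ⟨f a, mem_image_of_mem f a.2⟩, fun x => img x,
    fun x => ?_, Subtype.val_injective.comp img.injective, fun x => (img x).2, fun a => by simp⟩
  obtain ⟨a, ha, hfa⟩ := mem_image.1 (img x).2
  exact ⟨⟨a, ha⟩, by simp [hfa]⟩

theorem sq_add_self_le_two_pow {n : ℕ} (hn : 5 ≤ n) : n ^ 2 + n ≤ 2 ^ n := by
  induction n, hn using Nat.le_induction with
  | base => norm_num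
  | succ n hn ih => rw [pow_succ 2 n]; nlinarith

theorem complete_of_independent_set_image_2k_general {n q k : ℕ} (hn : 5 ≤ n) (hq : 2 ≤ q)
    (hkn : k ≤ n)
    (f : (Fin n → Fin q) → (Fin n → Fin q))
    (A : Finset (Fin n → Fin q))
    (hind : Disjoint (A.image f) A)
    (hcard : n + k ≤ A.card) (himg : (A.image f).card = 2 * k) :
    ∃ π : Equiv.Perm (Fin n → Fin q),
      ∀ i j : Fin n, Depends (fun y => π (f (π.symm y))) j i := by
  classical
  have hpow := sq_add_self_le_two_pow hn
  have : Nonempty (Fin n) := ⟨⟨0, by omega⟩⟩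
  obtain ⟨s, b, hs, hb, hbA, hfs⟩ := exists_pairing_of_card_image_eq_two_mul f A himg
  obtain ⟨el, pos, hel, hpos, hedge⟩ := exists_double_star_placement (D := Fin n) s hs
    (by simpa using hkn) (by simpa [add_comm] using hcard)
    (by simp only [Fintype.card_fin]; nlinarith)
  have hP : #(univ.image pos) ≤ k + n := card_image_le.trans (by simp)
  obtain ⟨ζ, hζ, hζ_pos, hζ_antipodal⟩ := exists_antipodal_pairs_avoiding (β := Fin k)
    (univ.image pos) (by simp only [Fintype.card_fin]; nlinarith)
  let bit : ZMod 2 → Fin q := fun a => ⟨a.val, a.val_lt.trans_le hq⟩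
  have hbit : Injective bit := fun a b h => ZMod.val_injective 2 (Fin.mk.inj_iff.1 h)
  obtain ⟨π, hπ⟩ := exists_perm_apply_eq_of_injective
    (e := Sum.elim (fun v => (el v : Fin n → Fin q)) b) (p := fun x => bit ∘ Sum.elim pos ζ x)
    ((Subtype.val_injective.comp hel).sumElim hb
      fun v x h => disjoint_left.1 hind (hbA x) (h ▸ (el v).2))
    (hbit.comp_left.comp <| hpos.sumElim hζ
      fun v x h => hζ_pos x (h ▸ mem_image_of_mem pos (mem_univ v)))
  refine ⟨π, fun i j => ?_⟩
  obtain ⟨u, u', t, hu, hu', hedge⟩ := hedge j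
  refine ⟨bit ∘ pos u, bit ∘ pos u', fun l hl => by simp [hedge, hl], ?_⟩
  have hπ_el : ∀ v, π.symm (bit ∘ pos v) = el v := fun v => π.symm_apply_eq.2 (hπ (.inl v)).symm
  have hπ_b : ∀ x, π (b x) = bit ∘ ζ x := fun x => hπ (.inr x)
  simp only [hπ_el, hfs, hu, hu', hπ_b]
  exact hbit.ne (hζ_antipodal t i)

theorem complete_of_independent_set_image_2k {n q k : ℕ} (hn : 5 ≤ n) (hq : 2 ≤ q)
    (hk : 1 ≤ k) (hkn : k ≤ n)
    (f : (Fin n → Fin q) → (Fin n → Fin q))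
    (A : Finset (Fin n → Fin q))
    (hind : Disjoint (A.image f) A)
    (hcard : n + k ≤ A.card) (himg : (A.image f).card = 2 * k) :
    ∃ π : Equiv.Perm (Fin n → Fin q),
      ∀ i j : Fin n, Depends (fun y => π (f (π.symm y))) j i :=
  complete_of_independent_set_image_2k_general hn hq hkn f A hind hcard himg
end

section
/- Let f : Q^n → Q^n with n ≥ 5 and f neither constant nor the identity. Then at least one of the following holds: (a) f has at least 2n fixed points; (b) f has at least n limit cycles of length ≥ 3; (c) f has an independent set of size at least 2n. -/
/-! Colour each point by the parity of its distance `cycleDist` to a base point chosen on its limit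
cycle. The parity alternates along every edge `x ↦ g x`, except at fixed points and at the base
point of an odd cycle, which get a third colour. If there are fewer than `2n` fixed points and
fewer than `n` odd limit cycles of length `≥ 3`, the two parity classes, both independent, cover
at least `q ^ n - 3n + 2 ≥ 4n - 1` points, so one of them has at least `2n` elements. -/

open Finset Function

section LimitCycle

variable {α : Type*} (g : α → α) {x : α}

def limitCycle (x : α) : Set α := {y | y ∈ periodicPts g ∧ ∃ t, g^[t] x = y}

theorem limitCycle_apply (x : α) : limitCycle g (g x) = limitCycle g x := by
  ext y
  refine ⟨fun ⟨hy, t, ht⟩ => ⟨hy, t + 1, by rwa [iterate_succ_apply]⟩,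
    fun ⟨hy, t, ht⟩ => ⟨hy, minimalPeriod g y + t - 1, ?_⟩⟩
  have hp := minimalPeriod_pos_of_mem_periodicPts hy
  rw [← iterate_succ_apply, Nat.succ_eq_add_one,
    Nat.sub_add_cancel (by omega), iterate_add_apply, ht, iterate_minimalPeriod]

theorem limitCycle_nonempty [Finite α] (x : α) : (limitCycle g x).Nonempty := by
  obtain ⟨i, j, hij, he⟩ := Finite.exists_ne_map_eq_of_infinite fun t => g^[t] x
  wlog hlt : i < j generalizing i j
  · exact this j i hij.symm he.symm (by omega)
  refine ⟨g^[i] x, mk_mem_periodicPts (Nat.sub_pos_of_lt hlt) ?_, i, rfl⟩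
  rw [IsPeriodicPt, IsFixedPt, ← iterate_add_apply, Nat.sub_add_cancel hlt.le]
  exact he.symm

variable [Finite α]

noncomputable def cycleBase (x : α) : α := (limitCycle_nonempty g x).some

theorem cycleBase_mem_limitCycle (x : α) : cycleBase g x ∈ limitCycle g x :=
  (limitCycle_nonempty g x).some_mem

theorem cycleBase_apply (x : α) : cycleBase g (g x) = cycleBase g x := by
  simp only [cycleBase, limitCycle_apply]

theorem cycleBase_iterate (x : α) (t : ℕ) : cycleBase g (g^[t] x) = cycleBase g x := by
  induction t with
  | zero => rfl
  | succ t ih => rw [iterate_succ_apply', cycleBase_apply, ih]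

theorem cycleBase_mem_periodicPts (x : α) : cycleBase g x ∈ periodicPts g :=
  (cycleBase_mem_limitCycle g x).1

noncomputable def cycleDist (x : α) : ℕ := sInf {t | g^[t] x = cycleBase g x}

theorem iterate_cycleDist (x : α) : g^[cycleDist g x] x = cycleBase g x :=
  Nat.sInf_mem (cycleBase_mem_limitCycle g x).2

theorem cycleDist_le {t : ℕ} (h : g^[t] x = cycleBase g x) : cycleDist g x ≤ t :=
  Nat.sInf_le h

theorem cycleDist_eq_add_one (hx : cycleBase g x ≠ x) :
    cycleDist g x = cycleDist g (g x) + 1 := by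
  have hpos : cycleDist g x ≠ 0 := fun h => hx <| by
    rw [← iterate_cycleDist g x, h, iterate_zero_apply]
  refine le_antisymm (cycleDist_le g ?_) ?_
  · rw [iterate_succ_apply, iterate_cycleDist, cycleBase_apply]
  · suffices cycleDist g (g x) ≤ cycleDist g x - 1 by omega
    refine cycleDist_le g ?_
    rw [← iterate_succ_apply, Nat.succ_eq_add_one, Nat.sub_add_cancel (by omega),
      iterate_cycleDist, cycleBase_apply]

theorem cycleDist_apply_of_cycleBase_eq (hx : cycleBase g x = x) :
    cycleDist g (g x) = minimalPeriod g x - 1 := by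
  have hp := minimalPeriod_pos_of_mem_periodicPts (hx ▸ cycleBase_mem_periodicPts g x)
  refine le_antisymm (cycleDist_le g ?_) ?_
  · rw [← iterate_succ_apply, Nat.succ_eq_add_one, Nat.sub_add_cancel hp,
      iterate_minimalPeriod, cycleBase_apply, hx]
  · have h : IsPeriodicPt g (cycleDist g (g x) + 1) x := by
      rw [IsPeriodicPt, IsFixedPt, iterate_succ_apply, iterate_cycleDist, cycleBase_apply, hx]
    have := h.minimalPeriod_le (Nat.succ_pos _)
    omega

theorem cycleDist_eq_zero_of_cycleBase_eq (hx : cycleBase g x = x) : cycleDist g x = 0 :=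
  Nat.le_zero.1 (cycleDist_le g hx.symm)

def IsOddCycleBase (x : α) : Prop :=
  cycleBase g x = x ∧ Odd (minimalPeriod g x) ∧ 3 ≤ minimalPeriod g x

theorem cycleDist_apply_mod_two_ne (hfix : g x ≠ x) (hx : ¬IsOddCycleBase g x) :
    cycleDist g (g x) % 2 ≠ cycleDist g x % 2 := by
  by_cases hb : cycleBase g x = x
  · have hp := minimalPeriod_pos_of_mem_periodicPts (hb ▸ cycleBase_mem_periodicPts g x)
    have hp1 : minimalPeriod g x ≠ 1 := mt minimalPeriod_eq_one_iff_isFixedPt.1 hfix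
    simp only [IsOddCycleBase, hb, Nat.odd_iff, true_and, not_and, not_le] at hx
    rw [cycleDist_apply_of_cycleBase_eq g hb, cycleDist_eq_zero_of_cycleBase_eq g hb]
    omega
  · rw [cycleDist_eq_add_one g hb]
    omega

theorem IsOddCycleBase.eq_of_iterate_eq {y : α} (hx : IsOddCycleBase g x)
    (hy : IsOddCycleBase g y) {s t : ℕ} (h : g^[s] x = g^[t] y) : x = y := by
  rw [← hx.1, ← hy.1, ← cycleBase_iterate g x s, h, cycleBase_iterate]

theorem exists_limitCycles_of_le_card [Fintype α] [DecidablePred (IsOddCycleBase g)] {n : ℕ}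
    (h : n ≤ #(univ.filter (IsOddCycleBase g))) :
    ∃ a : Fin n → α,
      (∀ m, ∃ p, 3 ≤ p ∧ g^[p] (a m) = a m ∧ ∀ t, 0 < t → t < p → g^[t] (a m) ≠ a m) ∧
      ∀ m m', m ≠ m' → ∀ s t : ℕ, g^[s] (a m) ≠ g^[t] (a m') := by
  obtain ⟨e⟩ := Function.Embedding.nonempty_of_card_le (α := Fin n)
    (β := {x // IsOddCycleBase g x}) (by rwa [Fintype.card_fin, Fintype.card_subtype])
  refine ⟨fun m => e m, fun m => ⟨_, (e m).2.2.2, iterate_minimalPeriod, fun t h0 ht =>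
    not_isPeriodicPt_of_pos_of_lt_minimalPeriod h0.ne' ht⟩, fun m m' hne s t he => hne ?_⟩
  exact e.injective (Subtype.ext ((e m).2.eq_of_iterate_eq g (e m').2 he))

theorem exists_disjoint_image_card [Fintype α] [DecidableEq α]
    [DecidablePred (IsOddCycleBase g)] :
    ∃ A : Finset α, Disjoint (A.image g) A ∧ Fintype.card α ≤
      2 * #A + #(univ.filter fun x => g x = x) + #(univ.filter (IsOddCycleBase g)) := by
  classical
  set parityClass : ℕ → Finset α := fun r =>
    univ.filter fun x => g x ≠ x ∧ ¬IsOddCycleBase g x ∧ cycleDist g x % 2 = r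
  have hdisj : ∀ r, Disjoint ((parityClass r).image g) (parityClass r) := by
    refine fun r => disjoint_left.2 ?_
    rintro _ hgx hx'
    obtain ⟨x, hx, rfl⟩ := mem_image.1 hgx
    simp only [parityClass, mem_filter, mem_univ, true_and] at hx hx'
    exact cycleDist_apply_mod_two_ne g hx.1 hx.2.1 (hx'.2.2.trans hx.2.2.symm)
  have hcover : Fintype.card α ≤ #(parityClass 0) + #(parityClass 1) +
      #(univ.filter fun x => g x = x) + #(univ.filter (IsOddCycleBase g)) := by
    calc Fintype.card α = #(univ : Finset α) := card_univ.symm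
      _ ≤ #(parityClass 0 ∪ parityClass 1 ∪ univ.filter (fun x => g x = x) ∪
            univ.filter (IsOddCycleBase g)) := card_le_card fun x _ => by
          simp only [parityClass, mem_union, mem_filter, mem_univ, true_and]
          have := Nat.mod_two_eq_zero_or_one (cycleDist g x)
          tauto
      _ ≤ _ := (card_union_le _ _).trans <| by
          gcongr; exact (card_union_le _ _).trans (by gcongr; exact card_union_le _ _)
  rcases le_total #(parityClass 0) #(parityClass 1) with h | h
  · exact ⟨parityClass 1, hdisj 1, by omega⟩
  · exact ⟨parityClass 0, hdisj 0, by omega⟩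

end LimitCycle

theorem seven_mul_le_two_pow_add_three {n : ℕ} (hn : 5 ≤ n) : 7 * n ≤ 2 ^ n + 3 := by
  induction n, hn using Nat.le_induction with
  | base => norm_num
  | succ n hn ih => rw [pow_succ]; omega

theorem fixed_points_or_cycles_or_independent_general {n q : ℕ} (hn : 5 ≤ n) (hq : 2 ≤ q)
    (f : (Fin n → Fin q) → (Fin n → Fin q)) :
    -- (a) at least 2n fixed points
    (2 * n ≤ (univ.filter (fun x : Fin n → Fin q => f x = x)).card) ∨
    -- (b) at least n limit cycles of length ≥ 3
    (∃ a : Fin n → (Fin n → Fin q),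
      (∀ m : Fin n, ∃ p, 3 ≤ p ∧ f^[p] (a m) = a m ∧
        ∀ t, 0 < t → t < p → f^[t] (a m) ≠ a m) ∧
      (∀ m m' : Fin n, m ≠ m' → ∀ s t : ℕ, f^[s] (a m) ≠ f^[t] (a m'))) ∨
    -- (c) an independent set of size at least 2n
    (∃ A : Finset (Fin n → Fin q), Disjoint (A.image f) A ∧ 2 * n ≤ A.card) := by
  classical
  rcases le_or_gt (2 * n) #(univ.filter fun x => f x = x) with hfix | hfix
  · exact Or.inl hfix
  rcases le_or_gt n #(univ.filter (IsOddCycleBase f)) with hcyc | hcyc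
  · exact Or.inr (Or.inl (exists_limitCycles_of_le_card f hcyc))
  obtain ⟨A, hA, hcard⟩ := exists_disjoint_image_card f
  have hsize : 7 * n ≤ Fintype.card (Fin n → Fin q) + 3 := by
    rw [Fintype.card_fun, Fintype.card_fin, Fintype.card_fin]
    exact (seven_mul_le_two_pow_add_three hn).trans (by gcongr)
  exact Or.inr (Or.inr ⟨A, hA, by omega⟩)

theorem fixed_points_or_cycles_or_independent {n q : ℕ} (hn : 5 ≤ n) (hq : 2 ≤ q)
    (f : (Fin n → Fin q) → (Fin n → Fin q))
    (hconst : ¬ ∃ c, f = fun _ => c) (hid : f ≠ id) :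
    -- (a) at least 2n fixed points
    (2 * n ≤ (univ.filter (fun x : Fin n → Fin q => f x = x)).card) ∨
    -- (b) at least n limit cycles of length ≥ 3
    (∃ a : Fin n → (Fin n → Fin q),
      (∀ m : Fin n, ∃ p, 3 ≤ p ∧ f^[p] (a m) = a m ∧
        ∀ t, 0 < t → t < p → f^[t] (a m) ≠ a m) ∧
      (∀ m m' : Fin n, m ≠ m' → ∀ s t : ℕ, f^[s] (a m) ≠ f^[t] (a m'))) ∨
    -- (c) an independent set of size at least 2n
    (∃ A : Finset (Fin n → Fin q), Disjoint (A.image f) A ∧ 2 * n ≤ A.card) :=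
  fixed_points_or_cycles_or_independent_general hn hq f
end

section
/- For every f : {0,1}^n → {0,1}^n and every k with 3·s(2^k, 2) ≤ 2^{n-1}, f has a balanced k-nice partition: a partition {A_1, A_2} of {0,1}^n with |A_1| = |A_2| = 2^{n-1} such that |A_ℓ ∩ f^{-1}(A_p)| is a multiple of 2^k for all ℓ, p ∈ {1,2}. -/
open Finset

/-- `DavProp m d s` : any `d` functions `[s] → ℕ` admit a size-`m` subset on which
all `d` sums vanish modulo `m`. -/
def DavProp (m d s : ℕ) : Prop :=
  ∀ a : Fin d → Fin s → ℕ, ∃ X : Finset (Fin s), X.card = m ∧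
    ∀ i : Fin d, m ∣ ∑ x ∈ X, a i x

/-- `sDav m d` is the smallest `s` satisfying `DavProp m d s`. -/
noncomputable def sDav (m d : ℕ) : ℕ := sInf {s | DavProp m d s}

/-!
Grow `A` by blocks of `m = 2^k` points, keeping `m ∣ |f⁻¹(A)|` and `m ∣ |A ∩ f⁻¹(A)|`; once
`|A| = 2^(n-1)`, the four intersection sizes are multiples of `m` by complementation.
To add a block, pick outside `A` a set `P` of `s = s(m,2)` points spanning no edge `x ↦ f x` other
than loops; it exists since `|Aᶜ| ≥ 3s` and a functional graph on `3r` vertices has such a set of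
size `r`. For `X ⊆ P` disjoint from `A`, both increments are sums over `x ∈ X` of weights depending
on `x` alone, namely `|f⁻¹(x)|` and `|A ∩ f⁻¹(x)| + [f x ∈ A ∪ {x}]`, so the defining property
of `s(m,2)` yields an `m`-subset `X ⊆ P` on which both increments vanish modulo `m`.
-/

section Davenport

variable {m d s : ℕ}

lemma DavProp.le (h : DavProp m d s) : m ≤ s := by
  obtain ⟨X, hX, -⟩ := h 0
  simpa [hX] using X.card_le_univ

-- Pigeonhole on residue vectors: `m` points with the same residues have sums `≡ 0 (mod m)`.
lemma davProp_of_pow_mul_lt [NeZero m] (hs : m ^ d * (m - 1) < s) : DavProp m d s := by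
  intro a
  obtain ⟨c, -, hc⟩ := exists_lt_card_fiber_of_mul_lt_card_of_maps_to
    (s := univ) (t := univ) (f := fun x i => (a i x : ZMod m)) (fun _ _ => mem_univ _)
    (by simpa [ZMod.card] using hs)
  obtain ⟨X, hXc, hX⟩ := exists_subset_card_eq (Nat.le_of_pred_lt hc)
  refine ⟨X, hX, fun i => ?_⟩
  rw [← ZMod.natCast_eq_zero_iff, Nat.cast_sum]
  calc ∑ x ∈ X, (a i x : ZMod m) = ∑ _x ∈ X, c i :=
        sum_congr rfl fun x hx => congrFun (mem_filter.1 (hXc hx)).2 i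
    _ = 0 := by simp [hX]

-- Needed because `sInf ∅ = 0`: the pigeonhole bound makes the infimum attained.
lemma davProp_sDav [NeZero m] : DavProp m d (sDav m d) :=
  Nat.sInf_mem (s := {s | DavProp m d s}) ⟨_, davProp_of_pow_mul_lt (lt_add_one _)⟩

lemma DavProp.exists_subset {α : Type*} (h : DavProp m d s) {S : Finset α} (hS : s ≤ #S)
    (a : Fin d → α → ℕ) : ∃ X ⊆ S, #X = m ∧ ∀ i, m ∣ ∑ x ∈ X, a i x := by
  obtain ⟨S', hS'S, rfl⟩ := exists_subset_card_eq hS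
  let e : Fin #S' ↪ α := S'.equivFin.symm.toEmbedding.trans (Function.Embedding.subtype _)
  obtain ⟨X, hX, hsum⟩ := h fun i x => a i (e x)
  refine ⟨X.map e, fun x hx => hS'S ?_, by rw [card_map, hX], fun i => by simpa using hsum i⟩
  obtain ⟨y, -, rfl⟩ := mem_map.1 hx
  exact (S'.equivFin.symm y).2

end Davenport

section FunctionalGraph

variable {α : Type*} (f : α → α)

def IsIndependent (P : Finset α) : Prop := ∀ x ∈ P, f x ∈ P → f x = x

variable {f}

lemma IsIndependent.mono {P Q : Finset α} (hQ : IsIndependent f Q) (hPQ : P ⊆ Q) :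
    IsIndependent f P :=
  fun x hx hfx => hQ x (hPQ hx) (hPQ hfx)

variable [DecidableEq α]

-- Greedily pick `u` with at most one preimage in `S`, then discard `u`, `f u` and that preimage.
lemma exists_isIndependent_subset (r : ℕ) {S : Finset α} (hS : 3 * r ≤ #S) :
    ∃ P ⊆ S, #P = r ∧ IsIndependent f P := by
  induction r generalizing S with
  | zero => exact ⟨∅, empty_subset _, card_empty, by simp [IsIndependent]⟩
  | succ r ih =>
    have hSne : S.Nonempty := card_pos.1 (by omega)
    obtain ⟨u, huS, hu⟩ :=
      exists_card_fiber_le_of_card_le_mul (s := S) (f := f) (n := 1) hSne (by simp)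
    set R := insert u (insert (f u) {x ∈ S | f x = u})
    have hR : #R ≤ 3 := (card_insert_le _ _).trans (by grw [card_insert_le, hu])
    obtain ⟨P, hPS, hP, hPind⟩ := ih (S := S \ R) (by grw [← le_card_sdiff]; omega)
    have hPR : ∀ x ∈ P, x ∉ R := fun x hx => (mem_sdiff.1 (hPS hx)).2
    have huP : u ∉ P := fun h => hPR u h (mem_insert_self _ _)
    refine ⟨insert u P, insert_subset huS (hPS.trans sdiff_subset),
      by rw [card_insert_of_notMem huP, hP], fun x hx hfx => ?_⟩
    rcases mem_insert.1 hx with rfl | hxP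
    · rcases mem_insert.1 hfx with h | h
      · exact h
      · exact absurd (by simp [R]) (hPR _ h)
    · rcases mem_insert.1 hfx with h | h
      · exact absurd (by simp [R, (mem_sdiff.1 (hPS hxP)).1, h]) (hPR x hxP)
      · exact hPind x hxP h

lemma sum_card_filter_apply_eq (B X : Finset α) :
    ∑ x ∈ X, #{y ∈ B | f y = x} = #{y ∈ B | f y ∈ X} := by
  simp only [card_filter]
  rw [sum_comm]
  exact sum_congr rfl fun y _ => sum_ite_eq X (f y) _

lemma card_filter_apply_mem_union {A X : Finset α} (hAX : Disjoint A X) (B : Finset α) :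
    #{y ∈ B | f y ∈ A ∪ X} = #{y ∈ B | f y ∈ A} + ∑ x ∈ X, #{y ∈ B | f y = x} := by
  rw [sum_card_filter_apply_eq, ← card_union_of_disjoint
    (disjoint_filter.2 fun _ _ h => disjoint_left.1 hAX h), ← filter_or]
  simp only [mem_union]

lemma IsIndependent.card_filter_apply_mem_union {A X : Finset α} (hX : IsIndependent f X) :
    #{x ∈ X | f x ∈ A ∪ X} = ∑ x ∈ X, if f x ∈ insert x A then 1 else 0 := by
  rw [card_filter]
  refine sum_congr rfl fun x hx => if_congr ?_ rfl rfl
  simp only [mem_union, mem_insert]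
  constructor
  · rintro (h | h)
    · exact Or.inr h
    · exact Or.inl (hX x hx h)
  · rintro (h | h)
    · exact Or.inr (h.symm ▸ hx)
    · exact Or.inl h

end FunctionalGraph

section NiceSet

variable {V : Type*} [Fintype V] [DecidableEq V] {f : V → V} {m : ℕ}

variable (f m) in
def IsNiceSet (A : Finset V) : Prop := m ∣ #{x | f x ∈ A} ∧ m ∣ #{x ∈ A | f x ∈ A}

lemma isNiceSet_empty : IsNiceSet f m ∅ := by simp [IsNiceSet]

lemma IsNiceSet.exists_union {s : ℕ} {A : Finset V} (hA : IsNiceSet f m A)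
    (hdav : DavProp m 2 s) (hfree : 3 * s ≤ #Aᶜ) :
    ∃ X, Disjoint A X ∧ #X = m ∧ IsNiceSet f m (A ∪ X) := by
  obtain ⟨P, hPA, hP, hPind⟩ := exists_isIndependent_subset (f := f) s hfree
  obtain ⟨X, hXP, hX, hdvd⟩ := hdav.exists_subset hP.ge
    ![fun x => #{y | f y = x}, fun x => #{y ∈ A | f y = x} + if f x ∈ insert x A then 1 else 0]
  have hAX : Disjoint A X := disjoint_compl_right.mono_right (hXP.trans hPA)
  refine ⟨X, hAX, hX, ?_, ?_⟩
  · rw [card_filter_apply_mem_union hAX]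
    exact dvd_add hA.1 (hdvd 0)
  · rw [filter_union, card_union_of_disjoint (disjoint_filter_filter hAX),
      card_filter_apply_mem_union hAX, (hPind.mono hXP).card_filter_apply_mem_union, add_assoc,
      ← sum_add_distrib]
    exact dvd_add hA.2 (hdvd 1)

variable (f) in
lemma exists_isNiceSet_card_eq {s : ℕ} (hdav : DavProp m 2 s) (j : ℕ)
    (hj : j * m + 3 * s ≤ Fintype.card V) : ∃ A : Finset V, #A = j * m ∧ IsNiceSet f m A := by
  induction j with
  | zero => exact ⟨∅, by simp, isNiceSet_empty⟩
  | succ j ih =>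
    rw [add_one_mul] at hj ⊢
    obtain ⟨A, hA, hnice⟩ := ih (by omega)
    obtain ⟨X, hAX, hX, hnice'⟩ := hnice.exists_union hdav (by rw [card_compl, hA]; omega)
    exact ⟨A ∪ X, by rw [card_union_of_disjoint hAX, hA, hX], hnice'⟩

lemma IsNiceSet.dvd_card_filter {A : Finset V} (hA : IsNiceSet f m A) (hm : m ∣ #A)
    (hmc : m ∣ #Aᶜ) :
    m ∣ #{x ∈ A | f x ∈ A} ∧ m ∣ #{x ∈ A | f x ∈ Aᶜ} ∧
      m ∣ #{x ∈ Aᶜ | f x ∈ A} ∧ m ∣ #{x ∈ Aᶜ | f x ∈ Aᶜ} := by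
  have hsplit (B : Finset V) : #{x ∈ B | f x ∈ A} + #{x ∈ B | f x ∈ Aᶜ} = #B := by
    simpa only [mem_compl] using card_filter_add_card_filter_not (s := B) (fun x => f x ∈ A)
  have hcompl : #{x ∈ A | f x ∈ A} + #{x ∈ Aᶜ | f x ∈ A} = #{x | f x ∈ A} := by
    simp only [card_filter]
    exact sum_add_sum_compl A _
  have h21 : m ∣ #{x ∈ Aᶜ | f x ∈ A} := (Nat.dvd_add_right hA.2).1 (hcompl ▸ hA.1)
  exact ⟨hA.2, (Nat.dvd_add_right hA.2).1 ((hsplit A).symm ▸ hm), h21,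
    (Nat.dvd_add_right h21).1 ((hsplit Aᶜ).symm ▸ hmc)⟩

end NiceSet

theorem balanced_nice_partition_exists_general {n k : ℕ}
    (f : (Fin n → Fin 2) → (Fin n → Fin 2))
    (hk : 3 * sDav (2 ^ k) 2 ≤ 2 ^ (n - 1)) :
    ∃ A : Finset (Fin n → Fin 2), A.card = 2 ^ (n - 1) ∧
      2 ^ k ∣ (A.filter (fun x => f x ∈ A)).card ∧
      2 ^ k ∣ (A.filter (fun x => f x ∈ Aᶜ)).card ∧
      2 ^ k ∣ (Aᶜ.filter (fun x => f x ∈ A)).card ∧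
      2 ^ k ∣ (Aᶜ.filter (fun x => f x ∈ Aᶜ)).card := by
  have hdav : DavProp (2 ^ k) 2 (sDav (2 ^ k) 2) := davProp_sDav
  have hkn : 2 ^ k ≤ 2 ^ (n - 1) := by have := hdav.le; omega
  have hdvd : 2 ^ k ∣ 2 ^ (n - 1) :=
    pow_dvd_pow 2 ((Nat.pow_le_pow_iff_right one_lt_two).1 hkn)
  have hcard : Fintype.card (Fin n → Fin 2) = 2 * 2 ^ (n - 1) := by
    have hn : n ≠ 0 := by
      rintro rfl
      have := hdav.le
      have := Nat.one_le_two_pow (n := k)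
      simp only [zero_tsub, pow_zero] at hk
      omega
    rw [Fintype.card_fun, Fintype.card_fin, Fintype.card_fin, ← pow_succ',
      Nat.sub_add_cancel (Nat.one_le_iff_ne_zero.2 hn)]
  obtain ⟨A, hA, hnice⟩ := exists_isNiceSet_card_eq f hdav (2 ^ (n - 1) / 2 ^ k)
    (by rw [Nat.div_mul_cancel hdvd]; omega)
  rw [Nat.div_mul_cancel hdvd] at hA
  have hAc : #Aᶜ = 2 ^ (n - 1) := by rw [card_compl, hcard, hA]; omega
  exact ⟨A, hA, hnice.dvd_card_filter (hA ▸ hdvd) (hAc ▸ hdvd)⟩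

theorem balanced_nice_partition_exists {n k : ℕ} (hn : 1 ≤ n)
    (f : (Fin n → Fin 2) → (Fin n → Fin 2))
    (hk : 3 * sDav (2 ^ k) 2 ≤ 2 ^ (n - 1)) :
    ∃ A : Finset (Fin n → Fin 2), A.card = 2 ^ (n - 1) ∧
      2 ^ k ∣ (A.filter (fun x => f x ∈ A)).card ∧
      2 ^ k ∣ (A.filter (fun x => f x ∈ Aᶜ)).card ∧
      2 ^ k ∣ (Aᶜ.filter (fun x => f x ∈ A)).card ∧
      2 ^ k ∣ (Aᶜ.filter (fun x => f x ∈ Aᶜ)).card :=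
  balanced_nice_partition_exists_general f hk
end

section
/- For all n, q ≥ 2 with n ≥ 3 or q ≥ 3, there exists f : Q^n → Q^n such that every digraph in 𝔾(f) has minimum in-degree at least 2. Concretely, the function f having one limit cycle of length q^{n-1} + 1 through configurations x^1,...,x^ℓ and mapping all other configurations to x^1 has the property that G(f) has minimum in-degree ≥ 2, and this property is invariant under conjugation by permutations of Q^n. -/
/-!
Take `f` with a single cycle `C` of length `q^(n-1) + 1`, all other points being sent to the first
cycle point `p`; every conjugate of `f` has the same shape, so it suffices to bound in-degrees for
such maps. Suppose `f_i(x) = φ(x_j)` for one coordinate `j`, and let `a = p_i`. Not all values of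
`φ` equal `a`, otherwise all of `C` would lie in a hyperplane `x_i = a`, which has only `q^(n-1)`
points. If `φ c = b ≠ a`, the hyperplane `x_j = c` lies inside `C` (a point outside is sent to `p`),
and its `q^(n-1)` successors on the cycle have `i`-th coordinate `b`: these are all cycle points but
`p`. Hence `p` is the only point with `x_j = c` and `x_i ≠ b`, which is absurd when `i ≠ j` or `c ≠ b`,
as `n ≥ 3` or `q ≥ 3`. If `i = j`, the successor of `p` shows `φ a = b ≠ a`, so `c := a` works.
-/

open Finset
open scoped Classical

open Function

structure CollapsesOntoCycle {α : Type*} {k : ℕ} (h : α → α) (ι : Fin (k + 1) → α) : Prop where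
  injective : Injective ι
  apply_cycle : ∀ t, h (ι t) = ι (t + 1)
  apply_of_notMem_range : ∀ y ∉ Set.range ι, h y = ι 0

namespace CollapsesOntoCycle

variable {α : Type*} {k : ℕ} {h : α → α} {ι : Fin (k + 1) → α}

theorem conj (hc : CollapsesOntoCycle h ι) (π : Equiv.Perm α) :
    CollapsesOntoCycle (fun y => π (h (π.symm y))) (π ∘ ι) where
  injective := π.injective.comp hc.injective
  apply_cycle t := by simp [hc.apply_cycle]
  apply_of_notMem_range y hy := by
    rw [comp_apply, ← hc.apply_of_notMem_range]
    rintro ⟨t, ht⟩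
    exact hy ⟨t, by simp [ht]⟩

theorem exists_of_lt_card [Fintype α] (hk : k < Fintype.card α) :
    ∃ (h : α → α) (ι : Fin (k + 1) → α), CollapsesOntoCycle h ι := by
  obtain ⟨ι⟩ := Embedding.nonempty_of_card_le (α := Fin (k + 1)) (β := α) (by simpa)
  exact ⟨extend ι (fun t => ι (t + 1)) (fun _ => ι 0), ι, ι.injective,
    ι.injective.extend_apply _ _, fun y hy => extend_apply' _ _ _ hy⟩

end CollapsesOntoCycle

section Depends

variable {n q : ℕ}

theorem card_filter_apply_eq (j : Fin n) (c : Fin q) :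
    #{x : Fin n → Fin q | x j = c} = q ^ (n - 1) := by
  simpa using Fintype.card_filter_piFinset_const_eq_of_mem (univ : Finset (Fin q)) j (mem_univ c)

theorem apply_eq_of_not_depends {f : (Fin n → Fin q) → Fin n → Fin q} {i : Fin n}
    (s : Finset (Fin n)) (hs : ∀ j ∈ s, ¬Depends f j i) {x y : Fin n → Fin q}
    (hxy : ∀ k ∉ s, x k = y k) : f x i = f y i := by
  induction s using Finset.induction_on generalizing x with
  | empty => rw [funext fun k => hxy k (notMem_empty k)]
  | insert a s _ ih =>
    have hx : f x i = f (update x a (y a)) i := by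
      by_contra hne
      exact hs a (mem_insert_self a s) ⟨x, _, fun k hk => (update_of_ne hk _ _).symm, hne⟩
    rw [hx]
    refine ih (fun j hj => hs j (mem_insert_of_mem hj)) fun k hk => ?_
    by_cases hka : k = a
    · simp [hka]
    · rw [update_of_ne hka]
      exact hxy k (by simp [hk, hka])

theorem exists_forall_apply_eq_of_card_depends_le_one {f : (Fin n → Fin q) → Fin n → Fin q}
    {i : Fin n} (hf : #{j | Depends f j i} ≤ 1) :
    ∃ (j : Fin n) (φ : Fin q → Fin q), ∀ x, f x i = φ (x j) := by
  have : Nonempty (Fin n) := ⟨i⟩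
  obtain ⟨j, hj⟩ := card_le_one_iff_subset_singleton.1 hf
  refine ⟨j, fun c => f (fun _ => c) i, fun x => apply_eq_of_not_depends (univ.erase j) ?_ ?_⟩
  · intro k hk hdep
    exact ne_of_mem_erase hk (mem_singleton.1 (hj (by simpa using hdep)))
  · intro k hk
    simp only [mem_erase, mem_univ, and_true, not_not] at hk
    rw [hk]

theorem one_lt_card_filter_apply_eq_and_apply_ne (hn : 2 ≤ n) (hq : 2 ≤ q)
    (h3 : 3 ≤ n ∨ 3 ≤ q) {i j : Fin n} {b c : Fin q} (hne : i ≠ j ∨ c ≠ b) :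
    1 < #{x : Fin n → Fin q | x j = c ∧ x i ≠ b} := by
  have : Nontrivial (Fin q) := Fin.nontrivial_iff_two_le.2 hq
  by_cases hij : i = j
  · subst hij
    have hcb : c ≠ b := hne.resolve_left (not_not.2 rfl)
    calc 1 < q ^ (n - 1) := Nat.lt_of_lt_of_le hq (Nat.le_self_pow (by omega) q)
      _ = #{x : Fin n → Fin q | x i = c} := (card_filter_apply_eq i c).symm
      _ ≤ _ := card_le_card fun x hx => by
        simp only [mem_filter, mem_univ, true_and] at hx ⊢
        exact ⟨hx, hx ▸ hcb⟩
  let y (v w : Fin q) : Fin n → Fin q := update (update (fun _ => w) j c) i v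
  have hy : ∀ v w, v ≠ b → y v w ∈ ({x | x j = c ∧ x i ≠ b} : Finset (Fin n → Fin q)) := by
    intro v w hv
    simp [y, update_of_ne (Ne.symm hij), hv]
  rw [one_lt_card_iff]
  rcases h3 with hn3 | hq3
  · obtain ⟨k, -, hk⟩ := exists_mem_notMem_of_card_lt_card (s := {i, j}) (t := univ)
      (card_le_two.trans_lt (by simp; omega))
    obtain ⟨v, hv⟩ := exists_ne b
    obtain ⟨w, w', hw⟩ := exists_pair_ne (Fin q)
    refine ⟨y v w, y v w', hy v w hv, hy v w' hv, fun e => hw ?_⟩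
    simp only [mem_insert, mem_singleton, not_or] at hk
    simpa [y, update_of_ne hk.1, update_of_ne hk.2] using congrFun e k
  · obtain ⟨v, v', hv, hv', hvv⟩ := one_lt_card_iff.1 (show 1 < #(univ.erase b) by simp; omega)
    exact ⟨y v v, y v' v, hy v v (ne_of_mem_erase hv), hy v' v (ne_of_mem_erase hv'),
      fun e => hvv (by simpa [y] using congrFun e i)⟩

end Depends

section Cycle

variable {n q : ℕ} {h : (Fin n → Fin q) → Fin n → Fin q}
  {ι : Fin (q ^ (n - 1) + 1) → Fin n → Fin q} {i j : Fin n} {φ : Fin q → Fin q}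

theorem exists_apply_ne_of_forall_apply_eq (hc : CollapsesOntoCycle h ι)
    (hφ : ∀ x, h x i = φ (x j)) : ∃ c, φ c ≠ ι 0 i := by
  by_contra! hconst
  have hslice : ∀ t, ι t ∈ ({x | x i = ι 0 i} : Finset (Fin n → Fin q)) := fun t => by
    rw [mem_filter, ← sub_add_cancel t 1, ← hc.apply_cycle, hφ, hconst]
    exact ⟨mem_univ _, rfl⟩
  have := card_le_card_of_injOn (s := univ) ι (fun t _ => hslice t) hc.injective.injOn
  rw [card_univ, Fintype.card_fin, card_filter_apply_eq] at this
  omega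

theorem mem_range_of_apply_ne (hc : CollapsesOntoCycle h ι) (hφ : ∀ x, h x i = φ (x j))
    {x : Fin n → Fin q} (hx : φ (x j) ≠ ι 0 i) : x ∈ Set.range ι := by
  by_contra hx'
  exact hx (by rw [← hφ, hc.apply_of_notMem_range x hx'])

theorem apply_eq_of_ne_zero (hc : CollapsesOntoCycle h ι) (hφ : ∀ x, h x i = φ (x j))
    {c : Fin q} (hca : φ c ≠ ι 0 i) {s : Fin (q ^ (n - 1) + 1)} (hs : s ≠ 0) :
    ι s i = φ c := by
  set T : Finset (Fin (q ^ (n - 1) + 1)) := {s | ι s i = φ c}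
  have hT : T ⊆ univ.erase 0 := fun t ht => by
    refine mem_erase.2 ⟨?_, mem_univ t⟩
    rintro rfl
    exact hca (mem_filter.1 ht).2.symm
  have hcard : q ^ (n - 1) ≤ #T := calc
    q ^ (n - 1) = #{x : Fin n → Fin q | x j = c} := (card_filter_apply_eq j c).symm
    _ ≤ #(image ι {t | ι t j = c}) := card_le_card fun x hx => by
      have hxj : x j = c := (mem_filter.1 hx).2
      obtain ⟨t, rfl⟩ := mem_range_of_apply_ne hc hφ (hxj ▸ hca)
      exact mem_image_of_mem ι (mem_filter.2 ⟨mem_univ t, hxj⟩)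
    _ ≤ #{t | ι t j = c} := card_image_le
    _ ≤ #T := card_le_card_of_injOn (· + 1)
      (fun t ht => by simp [T, ← hc.apply_cycle, hφ, (mem_filter.1 ht).2])
      (add_left_injective 1).injOn
  have hTeq := eq_of_subset_of_card_le hT (by simpa using hcard)
  have hsT : s ∈ T := hTeq ▸ mem_erase.2 ⟨hs, mem_univ s⟩
  exact (mem_filter.1 hsT).2

theorem card_filter_apply_eq_and_apply_ne_le_one (hc : CollapsesOntoCycle h ι)
    (hφ : ∀ x, h x i = φ (x j)) {c c' : Fin q} (hca : φ c ≠ ι 0 i) (hc'a : φ c' ≠ ι 0 i) :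
    #{x : Fin n → Fin q | x j = c' ∧ x i ≠ φ c} ≤ 1 := by
  have : Nonempty (Fin n → Fin q) := ⟨ι 0⟩
  refine card_le_one_iff_subset_singleton.2 ⟨ι 0, fun x hx => ?_⟩
  obtain ⟨hxj, hxi⟩ := (mem_filter.1 hx).2
  obtain ⟨s, rfl⟩ := mem_range_of_apply_ne hc hφ (hxj ▸ hc'a)
  rw [mem_singleton]
  by_contra hs
  exact hxi (apply_eq_of_ne_zero hc hφ hca fun h0 => hs (h0 ▸ rfl))

theorem not_forall_apply_eq (hn : 2 ≤ n) (hq : 2 ≤ q) (h3 : 3 ≤ n ∨ 3 ≤ q)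
    (hc : CollapsesOntoCycle h ι) : ¬∀ x, h x i = φ (x j) := by
  intro hφ
  obtain ⟨c, hca⟩ := exists_apply_ne_of_forall_apply_eq hc hφ
  obtain ⟨c', hc'a, hne⟩ : ∃ c', φ c' ≠ ι 0 i ∧ (i ≠ j ∨ c' ≠ φ c) := by
    by_cases hij : i = j
    · subst hij
      refine ⟨ι 0 i, ?_, Or.inr hca.symm⟩
      have h10 : (1 : Fin (q ^ (n - 1) + 1)) ≠ 0 := by
        have := pow_pos (show 0 < q by omega) (n - 1)
        rw [Ne, Fin.one_eq_zero_iff]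
        omega
      rw [← hφ, hc.apply_cycle, zero_add, apply_eq_of_ne_zero hc hφ hca h10]
      exact hca
    · exact ⟨c, hca, Or.inl hij⟩
  exact (one_lt_card_filter_apply_eq_and_apply_ne hn hq h3 hne).not_ge
    (card_filter_apply_eq_and_apply_ne_le_one hc hφ hca hc'a)

theorem two_le_card_depends (hn : 2 ≤ n) (hq : 2 ≤ q) (h3 : 3 ≤ n ∨ 3 ≤ q)
    (hc : CollapsesOntoCycle h ι) (i : Fin n) : 2 ≤ #{j | Depends h j i} := by
  by_contra! hlt
  obtain ⟨j, φ, hφ⟩ := exists_forall_apply_eq_of_card_depends_le_one (Nat.le_of_lt_succ hlt)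
  exact not_forall_apply_eq hn hq h3 hc hφ

end Cycle

theorem min_indegree_two_exists {n q : ℕ} (hn : 2 ≤ n) (hq : 2 ≤ q)
    (h : 3 ≤ n ∨ 3 ≤ q) :
    ∃ f : (Fin n → Fin q) → (Fin n → Fin q),
      ∀ π : Equiv.Perm (Fin n → Fin q), ∀ i : Fin n,
        2 ≤ (univ.filter (fun j => Depends (fun y => π (f (π.symm y))) j i)).card := by
  have hcard : q ^ (n - 1) < Fintype.card (Fin n → Fin q) := by
    simpa using Nat.pow_lt_pow_right hq (by omega : n - 1 < n)
  obtain ⟨f, ι, hf⟩ := CollapsesOntoCycle.exists_of_lt_card hcard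
  exact ⟨f, fun π i => two_le_card_depends hn hq h (hf.conj π) i⟩
end

section
/- Let f : Q^n → Q^n with image set X, and let k ∈ [n]. Suppose that for every non-empty strict subset Y of X, |f^{-1}(Y)| is not a multiple of q^k. Then every vertex of G(f) with in-degree at least 1 has strict in-degree at least n - k. -/
/-!
Let `S` be the set of in-neighbours of a non-source `i`. The coordinate `f · i` only reads the
coordinates in `S`, so each of its fibres is a union of sets `{s} × Q^Sᶜ` and has size divisible
by `q ^ (n - |S|)`. As `f · i` is not constant, such a fibre is the preimage of a non-empty proper
subset of the image (the image points with a prescribed `i`-th coordinate), so `q ^ k` does not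
divide `q ^ (n - |S|)`, i.e. `|S| > n - k`; at most one element of `S` is `i` itself.
-/

open Finset
open scoped Classical

section

variable {ι α β : Type*}

theorem apply_eq_of_forall_notMem_eq [DecidableEq ι] (g : (ι → α) → β) (D : Finset ι)
    (hD : ∀ j ∈ D, ∀ z w : ι → α, (∀ k, k ≠ j → z k = w k) → g z = g w) :
    ∀ x y : ι → α, (∀ j ∉ D, x j = y j) → g x = g y := by
  induction D using Finset.induction_on with
  | empty =>
    intro x y hxy
    exact congrArg g (funext fun j => hxy j (notMem_empty j))
  | @insert a D _ ih =>
    intro x y hxy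
    calc g x = g (Function.update x a (y a)) :=
          hD a (mem_insert_self a D) _ _ fun k hk => (Function.update_of_ne hk _ _).symm
      _ = g y := by
          refine ih (fun j hj => hD j (mem_insert_of_mem hj)) _ _ fun j hj => ?_
          by_cases hja : j = a
          · subst hja; simp
          · rw [Function.update_of_ne hja]
            exact hxy j (by simp [hja, hj])

theorem card_pow_card_compl_dvd_card_filter [Fintype ι] [DecidableEq ι] [Fintype α]
    (S : Finset ι) (p : (ι → α) → Prop) [DecidablePred p]
    (hp : ∀ x y : ι → α, (∀ j ∈ S, x j = y j) → (p x ↔ p y)) :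
    Fintype.card α ^ #Sᶜ ∣ #{x | p x} := by
  let e := Equiv.piEquivPiSubtypeProd (· ∈ S) (fun _ => α)
  -- an existential rather than a fixed filler for the coordinates off `S`: `α` may be empty
  let p₁ : ({j // j ∈ S} → α) → Prop := fun s => ∃ t, p (e.symm (s, t))
  have hp₁ : ∀ z, p (e.symm z) ↔ p₁ z.1 := by
    refine fun z => ⟨fun h => ⟨z.2, h⟩, fun ⟨t, ht⟩ => (hp _ _ fun j hj => ?_).1 ht⟩
    simp [e, Equiv.piEquivPiSubtypeProd, hj]
  have hcard : #{x | p x} = Fintype.card {s // p₁ s} * Fintype.card α ^ #Sᶜ := by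
    have hcompl : Fintype.card ({j // j ∉ S} → α) = Fintype.card α ^ #Sᶜ := by
      rw [Fintype.card_fun]
      simp [Fintype.card_subtype, filter_notMem_eq_sdiff, compl_eq_univ_sdiff]
    rw [← Fintype.card_subtype, ← hcompl, ← Fintype.card_prod]
    exact Fintype.card_congr <| (e.subtypeEquiv fun x => by simpa using hp₁ (e x)).trans
      Equiv.prodSubtypeFstEquivSubtypeProd
  exact hcard ▸ dvd_mul_left _ _

end

theorem apply_eq_of_forall_depends_eq {n q : ℕ} (f : (Fin n → Fin q) → (Fin n → Fin q))
    (i : Fin n) (x y : Fin n → Fin q) (hxy : ∀ j, Depends f j i → x j = y j) :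
    f x i = f y i := by
  refine apply_eq_of_forall_notMem_eq (f · i) {j | ¬ Depends f j i} (fun j hj z w hzw => ?_) x y
    fun j hj => hxy j (by simpa using hj)
  simp only [mem_filter, mem_univ, true_and, Depends, not_exists, not_and, not_not] at hj
  exact hj z w hzw

theorem nonsource_large_strict_indegree_general {n q k : ℕ}
    (f : (Fin n → Fin q) → (Fin n → Fin q))
    (hY : ∀ Y ⊆ Finset.univ.image f, Y.Nonempty → Y ≠ Finset.univ.image f →
      ¬ q ^ k ∣ (univ.filter (fun x => f x ∈ Y)).card) :
    ∀ i : Fin n, (∃ j, Depends f j i) →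
      n - k ≤ (univ.filter (fun j => j ≠ i ∧ Depends f j i)).card := by
  rintro i ⟨-, x₀, y₀, -, hne⟩
  by_contra! hlt
  have hS : #{j | Depends f j i} ≤ #{j | j ≠ i ∧ Depends f j i} + 1 := by
    rw [filter_and, filter_ne', erase_inter, univ_inter]
    exact Nat.le_add_of_sub_le pred_card_le_card_erase
  set S : Finset (Fin n) := {j | Depends f j i}
  have hkS : k ≤ #Sᶜ := by
    rw [card_compl, Fintype.card_fin]
    omega
  have hfiber : q ^ k ∣ #{x | f x i = f x₀ i} := by
    refine (pow_dvd_pow q hkS).trans ?_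
    simpa using card_pow_card_compl_dvd_card_filter S (f · i = f x₀ i) fun x y hxy => by
      rw [apply_eq_of_forall_depends_eq f i x y fun j hj => hxy j (by simpa [S] using hj)]
  set Y := {z ∈ univ.image f | z i = f x₀ i}
  refine hY Y (filter_subset _ _) ⟨f x₀, by simp [Y]⟩ (fun hYf => hne ?_) ?_
  · have : f y₀ ∈ Y := hYf ▸ mem_image_of_mem f (mem_univ y₀)
    exact ((mem_filter.1 this).2).symm
  · simpa [Y] using hfiber

theorem nonsource_large_strict_indegree {n q k : ℕ} (hk : 1 ≤ k) (hkn : k ≤ n)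
    (f : (Fin n → Fin q) → (Fin n → Fin q))
    (hY : ∀ Y ⊆ Finset.univ.image f, Y.Nonempty → Y ≠ Finset.univ.image f →
      ¬ q ^ k ∣ (univ.filter (fun x => f x ∈ Y)).card) :
    ∀ i : Fin n, (∃ j, Depends f j i) →
      n - k ≤ (univ.filter (fun j => j ≠ i ∧ Depends f j i)).card :=
  nonsource_large_strict_indegree_general f hY
end

section
/- For all n, q ≥ 2 and every k ∈ [n], there exists f : Q^n → Q^n such that every digraph in 𝔾(f) has at least k vertices of in-degree ≥ 1, and each such vertex has strict in-degree at least n - k. Concretely, one may take f which fixes a chosen set X of q^k configurations pointwise and maps everything else to a fixed x* ∈ X. -/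
/-!
Let `collapseTo X c` fix every point of `X` and send everything else to `c ∈ X`. Conjugating it by
a permutation `π` gives `collapseTo (π X) (π c)`, so it suffices to study such maps for an arbitrary
set `Y` of size `q ^ k`. A coordinate `i` is a source exactly when all points of `Y` agree with `c`
at `i`, so `Y` embeds into the configurations on the non-sources and there are at least `k` of
them. If `i` is not a source, pick `x ∈ Y` with `x i ≠ c i`: every configuration agreeing with `x`
on the in-neighbours of `i` is sent to a value with `i`-th entry `x i`, hence lies in `Y \ {c}`.
This gives `q ^ (n - #N(i)) < q ^ k`, i.e. at least `n - k + 1` in-neighbours.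
-/

open Finset
open scoped Classical

lemma Fintype.card_piFinset_ite_singleton {ι α : Type*} [Fintype ι] [DecidableEq ι] [Fintype α]
    (N : Finset ι) (x : ι → α) :
    #(Fintype.piFinset fun j => if j ∈ N then {x j} else univ) = Fintype.card α ^ #Nᶜ := by
  rw [Fintype.card_piFinset]
  simp only [apply_ite Finset.card, card_singleton, card_univ]
  rw [prod_ite, prod_const_one, prod_const, one_mul, filter_not, filter_mem_eq_inter, univ_inter,
    compl_eq_univ_sdiff]

section Collapse

variable {α : Type*}

noncomputable def collapseTo (Y : Finset α) (c x : α) : α := if x ∈ Y then x else c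

lemma collapseTo_of_mem {Y : Finset α} {c x : α} (hx : x ∈ Y) : collapseTo Y c x = x := if_pos hx

lemma collapseTo_of_notMem {Y : Finset α} {c x : α} (hx : x ∉ Y) : collapseTo Y c x = c := if_neg hx

lemma collapseTo_self (Y : Finset α) (c : α) : collapseTo Y c c = c := by
  unfold collapseTo; split_ifs <;> rfl

lemma conj_collapseTo (π : Equiv.Perm α) (X : Finset α) (c : α) :
    (fun y => π (collapseTo X c (π.symm y))) = collapseTo (X.map π.toEmbedding) (π c) := by
  funext y
  by_cases hy : π.symm y ∈ X
  · rw [collapseTo_of_mem hy, collapseTo_of_mem (mem_map_equiv.mpr hy), Equiv.apply_symm_apply]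
  · rw [collapseTo_of_notMem hy, collapseTo_of_notMem (mt mem_map_equiv.mp hy)]

end Collapse

section Depends

variable {n q : ℕ}

noncomputable def inNeighbors (f : (Fin n → Fin q) → (Fin n → Fin q)) (i : Fin n) :
    Finset (Fin n) :=
  univ.filter fun j => Depends f j i

noncomputable def nonsources (f : (Fin n → Fin q) → (Fin n → Fin q)) : Finset (Fin n) :=
  univ.filter fun i => ∃ j, Depends f j i

lemma filter_ne_and_depends (f : (Fin n → Fin q) → (Fin n → Fin q)) (i : Fin n) :
    univ.filter (fun j => j ≠ i ∧ Depends f j i) = (inNeighbors f i).erase i := by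
  ext j
  simp [inNeighbors]

lemma apply_eq_of_forall_inNeighbors {f : (Fin n → Fin q) → (Fin n → Fin q)} {i : Fin n}
    {x y : Fin n → Fin q} (h : ∀ j ∈ inNeighbors f i, x j = y j) : f x i = f y i := by
  suffices key : ∀ (s : Finset (Fin n)) (x : Fin n → Fin q), (∀ j ∉ s, x j = y j) →
      (∀ j ∈ inNeighbors f i, x j = y j) → f x i = f y i from
    key univ x (by simp) h
  intro s
  induction s using Finset.induction_on with
  | empty =>
    intro x hout _
    rw [funext fun j => hout j (notMem_empty j)]
  | insert a s _ ih =>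
    intro x hout hN
    set x' := Function.update x a (y a)
    have hstep : f x i = f x' i := by
      by_cases hdep : Depends f a i
      · rw [show x' = x from Function.update_eq_self_iff.mpr (hN a (by simpa [inNeighbors])).symm]
      · by_contra hne
        exact hdep ⟨x, x', fun j hj => (Function.update_of_ne hj _ _).symm, hne⟩
    have hx' : ∀ j, j ≠ a → x' j = x j := fun j hj => Function.update_of_ne hj _ _
    rw [hstep]
    refine ih x' (fun j hj => ?_) (fun j hj => ?_)
    · by_cases hja : j = a
      · simp [x', hja]
      · rw [hx' j hja]; exact hout j (by simp [hja, hj])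
    · by_cases hja : j = a
      · simp [x', hja]
      · rw [hx' j hja]; exact hN j hj

lemma apply_eq_of_notMem_nonsources {f : (Fin n → Fin q) → (Fin n → Fin q)} {i : Fin n}
    (hi : i ∉ nonsources f) (x y : Fin n → Fin q) : f x i = f y i :=
  apply_eq_of_forall_inNeighbors fun j hj =>
    absurd ⟨j, (mem_filter.mp hj).2⟩ fun hdep => hi (mem_filter.mpr ⟨mem_univ i, hdep⟩)

variable {Y : Finset (Fin n → Fin q)} {c : Fin n → Fin q}

lemma card_le_pow_card_nonsources_collapseTo :
    #Y ≤ q ^ #(nonsources (collapseTo Y c)) := by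
  have hsub : Y ⊆ Fintype.piFinset fun j =>
      if j ∈ (nonsources (collapseTo Y c))ᶜ then {c j} else univ := by
    intro y hy
    refine Fintype.mem_piFinset.mpr fun j => ?_
    split_ifs with hj
    · have := apply_eq_of_notMem_nonsources (mem_compl.mp hj) y c
      rw [collapseTo_of_mem hy, collapseTo_self] at this
      simp [this]
    · exact mem_univ _
  have := card_le_card hsub
  rwa [Fintype.card_piFinset_ite_singleton, compl_compl, Fintype.card_fin] at this

lemma exists_mem_apply_ne_of_mem_nonsources {i : Fin n} (hi : i ∈ nonsources (collapseTo Y c)) :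
    ∃ x ∈ Y, x i ≠ c i := by
  obtain ⟨-, a, b, -, hab⟩ := by simpa [nonsources] using hi
  have key : ∀ x, collapseTo Y c x i ≠ c i → x ∈ Y ∧ x i ≠ c i := fun x hx => by
    by_cases hxY : x ∈ Y
    · exact ⟨hxY, collapseTo_of_mem hxY ▸ hx⟩
    · exact absurd (by rw [collapseTo_of_notMem hxY]) hx
  by_cases ha : collapseTo Y c a i = c i
  · exact ⟨b, key b (ha ▸ hab.symm)⟩
  · exact ⟨a, key a ha⟩

lemma pow_card_compl_inNeighbors_le_card_erase {i : Fin n}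
    (hi : i ∈ nonsources (collapseTo Y c)) :
    q ^ #(inNeighbors (collapseTo Y c) i)ᶜ ≤ #(Y.erase c) := by
  obtain ⟨x, hxY, hxi⟩ := exists_mem_apply_ne_of_mem_nonsources hi
  set N := inNeighbors (collapseTo Y c) i
  have hsub : (Fintype.piFinset fun j => if j ∈ N then {x j} else univ) ⊆ Y.erase c := by
    intro z hz
    have hzN : ∀ j ∈ N, z j = x j := fun j hj => by simpa [hj] using Fintype.mem_piFinset.mp hz j
    have hzx : collapseTo Y c z i = x i := by
      rw [apply_eq_of_forall_inNeighbors hzN, collapseTo_of_mem hxY]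
    have hzY : z ∈ Y := by
      by_contra hzY
      exact hxi (by rw [← hzx, collapseTo_of_notMem hzY])
    rw [collapseTo_of_mem hzY] at hzx
    exact mem_erase.mpr ⟨fun hzc => hxi (hzc ▸ hzx.symm), hzY⟩
  have := card_le_card hsub
  rwa [Fintype.card_piFinset_ite_singleton, Fintype.card_fin] at this

end Depends

theorem k_nonsources_exists_general {n q : ℕ} (hq : 2 ≤ q)
    (k : ℕ) (hkn : k ≤ n) :
    ∃ f : (Fin n → Fin q) → (Fin n → Fin q),
      ∀ π : Equiv.Perm (Fin n → Fin q),
        (k ≤ (univ.filter (fun i : Fin n =>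
          ∃ j, Depends (fun y => π (f (π.symm y))) j i)).card) ∧
        (∀ i : Fin n, (∃ j, Depends (fun y => π (f (π.symm y))) j i) →
          n - k ≤ (univ.filter (fun j => j ≠ i ∧
            Depends (fun y => π (f (π.symm y))) j i)).card) := by
  obtain ⟨S, -, hS⟩ := exists_subset_card_eq (s := (univ : Finset (Fin n))) (by simpa using hkn)
  set c : Fin n → Fin q := fun _ => ⟨0, by omega⟩
  set X := Fintype.piFinset fun j => if j ∈ Sᶜ then {c j} else univ
  have hX : #X = q ^ k := by
    simp only [X, Fintype.card_piFinset_ite_singleton, compl_compl, Fintype.card_fin, hS]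
  have hcX : c ∈ X := Fintype.mem_piFinset.mpr fun j => by split_ifs <;> simp
  refine ⟨collapseTo X c, fun π => ?_⟩
  rw [conj_collapseTo]
  set Y := X.map π.toEmbedding
  have hY : #Y = q ^ k := by rw [card_map, hX]
  have hcY : π c ∈ Y := mem_map_of_mem _ hcX
  refine ⟨?_, fun i hi => ?_⟩
  · exact (Nat.pow_le_pow_iff_right (by omega)).mp (hY ▸ card_le_pow_card_nonsources_collapseTo)
  · have hle := pow_card_compl_inNeighbors_le_card_erase (mem_filter.mpr ⟨mem_univ i, hi⟩)
    rw [card_erase_of_mem hcY, hY, card_compl, Fintype.card_fin] at hle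
    have hlt : n - #(inNeighbors (collapseTo Y (π c)) i) < k :=
      (Nat.pow_lt_pow_iff_right (by omega)).mp (hle.trans_lt (Nat.sub_lt (by positivity) one_pos))
    rw [filter_ne_and_depends]
    have := pred_card_le_card_erase (s := inNeighbors (collapseTo Y (π c)) i) (a := i)
    omega

theorem k_nonsources_exists {n q : ℕ} (hn : 2 ≤ n) (hq : 2 ≤ q)
    (k : ℕ) (hk : 1 ≤ k) (hkn : k ≤ n) :
    ∃ f : (Fin n → Fin q) → (Fin n → Fin q),
      ∀ π : Equiv.Perm (Fin n → Fin q),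
        (k ≤ (univ.filter (fun i : Fin n =>
          ∃ j, Depends (fun y => π (f (π.symm y))) j i)).card) ∧
        (∀ i : Fin n, (∃ j, Depends (fun y => π (f (π.symm y))) j i) →
          n - k ≤ (univ.filter (fun j => j ≠ i ∧
            Depends (fun y => π (f (π.symm y))) j i)).card) :=
  k_nonsources_exists_general hq k hkn
end

section
/- For all n, q ≥ 2, there exists f : Q^n → Q^n such that every digraph in 𝔾(f) has at least ⌊n²/4⌋ arcs. -/
open Finset
open scoped Classical

/-!
The witness collapses a set `D` of `q ^ m` words, `m = ⌊n/2⌋ - 1`, onto a word `y₀ ∉ D` and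
fixes all other words. Conjugating it by `π` gives the collapse of `π D` onto `π y₀`, so it
suffices to count the arcs of a collapse.

If coordinate `i` of a map depends on `d` coordinates, every fiber of that coordinate is a union
of cylinders of size `q ^ (n - d)`. For the collapse, the fiber over a letter `a ≠ y₀ i` has
`q ^ (n - 1)` elements minus the fewer than `q ^ (m + 1)` words of `D` with `i`-th letter `a`.
Hence when `d < n - m` no word of `D` has such a letter: `D ∪ {y₀}` lies in the cylinder
fixing all these low in-degree coordinates. That cylinder must hold `q ^ m + 1` words, so at
most `n - m - 1` coordinates have in-degree below `n - m`, and the digraph has at least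
`(m + 1) (n - m) = ⌊n/2⌋ (⌈n/2⌉ + 1) ≥ ⌊n²/4⌋` arcs.
-/

section DependsOn

variable {ι α β : Type*} [Fintype ι]

theorem dependsOn_of_forall_notMem {g : (ι → α) → β} {s : Set ι}
    (h : ∀ j ∉ s, DependsOn g {j}ᶜ) : DependsOn g s := by
  intro x y hxy
  suffices ∀ t : Finset ι, ∀ x, (∀ i ∉ t, x i = y i) → (∀ i ∈ s, x i = y i) → g x = g y from
    this univ x (by simp) hxy
  intro t
  induction t using Finset.induction_on with
  | empty => exact fun x hx _ => congrArg g (funext fun i => hx i (notMem_empty i))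
  | insert j t _ ih =>
    intro x hx hxs
    have hupd : ∀ i, (i ≠ j → x i = y i) → Function.update x j (y j) i = y i := by
      intro i hi
      rcases eq_or_ne i j with rfl | hij
      · exact Function.update_self ..
      · rw [Function.update_of_ne hij, hi hij]
    calc g x = g (Function.update x j (y j)) := by
          by_cases hj : j ∈ s
          · rw [Function.update_eq_self_iff.mpr (hxs j hj).symm]
          · exact h j hj fun i hi => (Function.update_of_ne hi _ _).symm
      _ = g y := ih _ (fun i hi => hupd i fun hij => hx i (by simp [hi, hij]))
          (fun i hi => hupd i fun _ => hxs i hi)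

variable [DecidableEq ι] [Fintype α]

theorem card_filter_forall_mem_eq (S : Finset ι) (z : ι → α)
    [DecidablePred fun x : ι → α => ∀ j ∈ S, x j = z j] :
    #{x : ι → α | ∀ j ∈ S, x j = z j} = Fintype.card α ^ (Fintype.card ι - #S) := by
  have hcyl : ({x : ι → α | ∀ j ∈ S, x j = z j} : Finset (ι → α)) =
      Fintype.piFinset fun j => if j ∈ S then {z j} else univ := by
    ext x
    simp only [mem_filter, mem_univ, true_and, Fintype.mem_piFinset]
    refine ⟨fun hx j => ?_, fun hx j hj => by simpa [hj] using hx j⟩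
    split_ifs with hj
    · exact mem_singleton.mpr (hx j hj)
    · exact mem_univ _
  rw [hcyl, Fintype.card_piFinset]
  simp only [apply_ite Finset.card, card_singleton, card_univ]
  rw [prod_ite, prod_const_one, one_mul, prod_const, filter_not, card_sdiff_of_subset
    (filter_subset _ _), card_univ, filter_mem_eq_inter, univ_inter]

theorem pow_dvd_card_filter_of_dependsOn [DecidableEq β] {g : (ι → α) → β} {S : Finset ι}
    (hg : DependsOn g S) (b : β) :
    Fintype.card α ^ (Fintype.card ι - #S) ∣ #{x | g x = b} := by
  rw [card_eq_sum_card_fiberwise (f := S.restrict) (t := univ) fun _ _ => mem_coe.mpr (mem_univ _)]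
  refine dvd_sum fun z _ => ?_
  rcases ({x | g x = b ∧ S.restrict x = z} : Finset (ι → α)).eq_empty_or_nonempty
    with hempty | ⟨x₀, hx₀⟩
  · simp [filter_filter, hempty]
  obtain ⟨hx₀b, rfl⟩ := (mem_filter.mp hx₀).2
  have hfiber : ({x | g x = b} : Finset (ι → α)).filter (fun x => S.restrict x = S.restrict x₀) =
      ({x | ∀ j ∈ S, x j = x₀ j} : Finset (ι → α)) := by
    ext x
    simp only [filter_filter, mem_filter, mem_univ, true_and, funext_iff, Subtype.forall,
      restrict_def]
    exact ⟨fun h => h.2, fun h => ⟨hx₀b ▸ hg fun j hj => h j hj, h⟩⟩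
  rw [hfiber, card_filter_forall_mem_eq]

end DependsOn

section Dependency

variable {n q : ℕ}

noncomputable def inDegree (f : (Fin n → Fin q) → (Fin n → Fin q)) (i : Fin n) : ℕ :=
  #{j | Depends f j i}

theorem not_depends_iff {f : (Fin n → Fin q) → (Fin n → Fin q)} {j i : Fin n} :
    ¬ Depends f j i ↔ DependsOn (fun x => f x i) {j}ᶜ := by
  simp [Depends, DependsOn]

theorem dependsOn_setOf_depends (f : (Fin n → Fin q) → (Fin n → Fin q)) (i : Fin n) :
    DependsOn (fun x => f x i) ↑(univ.filter fun j => Depends f j i) :=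
  dependsOn_of_forall_notMem fun j hj => not_depends_iff.mp (by simpa using hj)

theorem pow_dvd_card_filter_apply_eq (f : (Fin n → Fin q) → (Fin n → Fin q)) (i : Fin n)
    (a : Fin q) : q ^ (n - inDegree f i) ∣ #{x | f x i = a} := by
  simpa [inDegree] using pow_dvd_card_filter_of_dependsOn (dependsOn_setOf_depends f i) a

theorem card_filter_depends_eq_sum_inDegree (f : (Fin n → Fin q) → (Fin n → Fin q)) :
    #{p : Fin n × Fin n | Depends f p.1 p.2} = ∑ i, inDegree f i := by
  simp only [inDegree, card_filter, Fintype.sum_prod_type]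
  exact sum_comm

end Dependency

section Collapse

def collapse {α : Type*} [DecidableEq α] (D : Finset α) (y₀ x : α) : α :=
  if x ∈ D then y₀ else x

theorem conj_collapse {α : Type*} [DecidableEq α] (π : Equiv.Perm α) (D : Finset α) (y₀ : α) :
    (fun y => π (collapse D y₀ (π.symm y))) = collapse (D.map π.toEmbedding) (π y₀) := by
  funext y
  simp only [collapse, apply_ite π, Equiv.apply_symm_apply, mem_map_equiv]

variable {n q m : ℕ} {D : Finset (Fin n → Fin q)} {y₀ : Fin n → Fin q}

theorem card_filter_collapse_apply_eq_add {i : Fin n} {a : Fin q} (ha : a ≠ y₀ i) :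
    #{x | collapse D y₀ x i = a} + #{x ∈ D | x i = a} = q ^ (n - 1) := by
  have hout : (univ.filter fun x => collapse D y₀ x i = a) =
      (univ.filter fun x : Fin n → Fin q => x i = a).filter (· ∉ D) := by
    ext x
    simp only [mem_filter, mem_univ, true_and]
    by_cases hx : x ∈ D
    · simp [collapse, hx, ha.symm]
    · simp [collapse, hx]
  have hin : D.filter (fun x => x i = a) =
      (univ.filter fun x : Fin n → Fin q => x i = a).filter (· ∈ D) := by
    ext x
    simp [and_comm]
  have hcyl : (univ.filter fun x : Fin n → Fin q => x i = a) =
      univ.filter fun x : Fin n → Fin q => ∀ j ∈ ({i} : Finset (Fin n)), x j = (fun _ => a) j := by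
    simp
  rw [hout, hin, add_comm, card_filter_add_card_filter_not, hcyl, card_filter_forall_mem_eq]
  simp

theorem apply_eq_of_inDegree_lt (hq : 1 < q) (hD : #D ≤ q ^ m) (hmn : m + 1 ≤ n - 1) {i : Fin n}
    (hi : m + inDegree (collapse D y₀) i < n) {x : Fin n → Fin q} (hx : x ∈ D) : x i = y₀ i := by
  by_contra hne
  have hM_pos : 0 < #{x' ∈ D | x' i = x i} := card_pos.mpr ⟨x, mem_filter.mpr ⟨hx, rfl⟩⟩
  have hM_lt : #{x' ∈ D | x' i = x i} < q ^ (m + 1) :=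
    ((card_filter_le _ _).trans hD).trans_lt (Nat.pow_lt_pow_right hq m.lt_succ_self)
  have hfiber : q ^ (m + 1) ∣ #{x' | collapse D y₀ x' i = x i} :=
    (pow_dvd_pow q (by omega)).trans (pow_dvd_card_filter_apply_eq _ i _)
  have hM_dvd : q ^ (m + 1) ∣ #{x' ∈ D | x' i = x i} := by
    rw [← Nat.dvd_add_right hfiber, card_filter_collapse_apply_eq_add hne]
    exact pow_dvd_pow q hmn
  exact hM_pos.ne' (Nat.eq_zero_of_dvd_of_lt hM_dvd hM_lt)

theorem card_filter_inDegree_lt_add_lt (hq : 1 < q) (hD : #D = q ^ m) (hy₀ : y₀ ∉ D)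
    (hmn : m + 1 ≤ n - 1) : #{i | m + inDegree (collapse D y₀) i < n} + m < n := by
  set I : Finset (Fin n) := {i | m + inDegree (collapse D y₀) i < n}
  have hsub : insert y₀ D ⊆ univ.filter fun x : Fin n → Fin q => ∀ i ∈ I, x i = y₀ i := by
    intro x hx
    rcases mem_insert.mp hx with rfl | hxD
    · simp
    · simp only [mem_filter, mem_univ, true_and]
      exact fun i hi => apply_eq_of_inDegree_lt hq hD.le hmn (mem_filter.mp hi).2 hxD
  have hcard := card_le_card hsub
  rw [card_insert_of_notMem hy₀, hD, card_filter_forall_mem_eq] at hcard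
  simp only [Fintype.card_fin] at hcard
  have := (Nat.pow_lt_pow_iff_right hq).mp (Nat.lt_of_succ_le hcard)
  omega

theorem le_card_filter_depends_collapse (hq : 1 < q) (hD : #D = q ^ m) (hy₀ : y₀ ∉ D)
    (hmn : m + 1 ≤ n - 1) :
    (m + 1) * (n - m) ≤ #{p : Fin n × Fin n | Depends (collapse D y₀) p.1 p.2} := by
  rw [card_filter_depends_eq_sum_inDegree]
  have hI := card_filter_inDegree_lt_add_lt hq hD hy₀ hmn
  set I : Finset (Fin n) := {i | m + inDegree (collapse D y₀) i < n}
  have hIc : m + 1 ≤ #Iᶜ := by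
    rw [card_compl, Fintype.card_fin]
    omega
  calc (m + 1) * (n - m) ≤ #Iᶜ * (n - m) := Nat.mul_le_mul_right _ hIc
    _ ≤ ∑ i ∈ Iᶜ, inDegree (collapse D y₀) i := by
        simpa using card_nsmul_le_sum Iᶜ _ (n - m) fun i hi => by
          simp only [I, mem_compl, mem_filter, mem_univ, true_and, not_lt] at hi
          omega
    _ ≤ ∑ i, inDegree (collapse D y₀) i := sum_le_sum_of_subset (subset_univ _)

end Collapse

theorem exists_finset_card_eq_notMem {α : Type*} [Fintype α] {k : ℕ} (hk : k < Fintype.card α) :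
    ∃ D : Finset α, ∃ y₀ ∉ D, #D = k := by
  obtain ⟨E, -, hE⟩ := exists_subset_card_eq (s := (univ : Finset α)) (n := k + 1) (by simpa)
  obtain ⟨y₀, hy₀⟩ := (card_pos (s := E)).mp (by omega)
  exact ⟨E.erase y₀, y₀, notMem_erase y₀ E, by rw [card_erase_of_mem hy₀, hE, Nat.add_sub_cancel]⟩

theorem sq_div_four_le (n : ℕ) : n ^ 2 / 4 ≤ n / 2 * (n - n / 2 + 1) := by
  obtain ⟨t, rfl | rfl⟩ := Nat.even_or_odd' n
  · rw [show 2 * t / 2 = t by omega, show 2 * t - t + 1 = t + 1 by omega]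
    exact Nat.le_of_lt_succ (Nat.div_lt_of_lt_mul (by nlinarith))
  · rw [show (2 * t + 1) / 2 = t by omega, show 2 * t + 1 - t + 1 = t + 2 by omega]
    exact Nat.le_of_lt_succ (Nat.div_lt_of_lt_mul (by nlinarith))

theorem dense_digraphs_exist {n q : ℕ} (hn : 2 ≤ n) (hq : 2 ≤ q) :
    ∃ f : (Fin n → Fin q) → (Fin n → Fin q),
      ∀ π : Equiv.Perm (Fin n → Fin q),
        n ^ 2 / 4 ≤ (univ.filter (fun p : Fin n × Fin n =>
          Depends (fun y => π (f (π.symm y))) p.1 p.2)).card := by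
  set m := n / 2 - 1
  have hmn : m + 1 ≤ n - 1 := by omega
  obtain ⟨D, y₀, hy₀, hD⟩ := exists_finset_card_eq_notMem (α := Fin n → Fin q) (k := q ^ m)
    (by simpa using Nat.pow_lt_pow_right hq (by omega : m < n))
  refine ⟨collapse D y₀, fun π => ?_⟩
  rw [conj_collapse]
  calc n ^ 2 / 4 ≤ n / 2 * (n - n / 2 + 1) := sq_div_four_le n
    _ = (m + 1) * (n - m) := by congr 1 <;> omega
    _ ≤ _ := le_card_filter_depends_collapse hq (by simpa using hD) (by simpa using hy₀) hmn
end
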